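/- arXiv:1912.10654 — 7 statements merged into one kernel-verified Lean document; each statement's English description precedes it below -/
import Mathlib

section
/- Let G₁, G₂ be groups, and α₁, β₁ ∈ Aut(G₁), γ₁, δ₁, γ₂, δ₂ ∈ Aut(G₂), α₂, β₂ ∈ Aut(G₁). For homogeneous elements m of degree (g₁, h₁) and n of degree (g₂, h₂), the braiding c(m ⊗ n) = β₁⁻¹(g₁) ▷ n ⊗ m ◁ δ₁⁻¹(h₂) sends the homogeneous component of degree (g₁, h₁) ⊗ (g₂, h₂) into the component of degree (α₂β₁⁻¹(g₁) g₂ β₂β₁⁻¹(g₁⁻¹), h₂) ⊗ (g₁, γ₁δ₁⁻¹(h₂⁻¹) h₁ h₂). -/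
theorem ydl_braiding_grading_groups_general
    {G₁ G₂ M N : Type*} [Group G₁] [Group G₂]
    (α₁ β₁ α₂ β₂ : G₁ ≃* G₁) (γ₁ δ₁ : G₂ ≃* G₂)
    -- left G₁-action and right G₂-action on M, forming a biset
    (lM : G₁ → M → M) (rM : M → G₂ → M)
    (hlM₁ : ∀ m, lM 1 m = m)
    -- left G₁-action and right G₂-action on N, forming a biset
    (lN : G₁ → N → N)
    -- gradings
    (Mc : G₁ → G₂ → Set M) (Nc : G₁ → G₂ → Set N)
    -- (α₁,β₁,γ₁,δ₁)-compatibility for M :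
    (hM : ∀ g' h' g h m, m ∈ Mc g h →
      rM (lM g' m) h' ∈ Mc (α₁ g' * g * β₁ g'⁻¹) (γ₁ h'⁻¹ * h * δ₁ h'))
    -- left and right compatibility for N with (α₂,β₂,γ₂,δ₂) :
    (hNl : ∀ g a b n, n ∈ Nc a b → lN g n ∈ Nc (α₂ g * a * β₂ g⁻¹) b) :
    ∀ (g₁ : G₁) (h₁ : G₂) (g₂ : G₁) (h₂ : G₂) (m : M) (n : N),
      m ∈ Mc g₁ h₁ → n ∈ Nc g₂ h₂ →
      lN (β₁.symm g₁) n ∈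
        Nc (α₂ (β₁.symm g₁) * g₂ * β₂ (β₁.symm g₁⁻¹)) h₂ ∧
      rM m (δ₁.symm h₂) ∈ Mc g₁ (γ₁ (δ₁.symm h₂⁻¹) * h₁ * h₂) := by
  intro g₁ h₁ g₂ h₂ m n hm hn
  refine ⟨?_, ?_⟩
  · simpa only [map_inv] using hNl (β₁.symm g₁) g₂ h₂ n hn
  · simpa only [hlM₁, map_one, inv_one, mul_one, one_mul, map_inv,
      MulEquiv.apply_symm_apply] using hM 1 (δ₁.symm h₂) g₁ h₁ m hm

/-- the braiding `c(m ⊗ n) = β₁⁻¹(g₁) ▷ n ⊗ m ◁ δ₁⁻¹(h₂)` on graded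
Yetter-Drinfeld-Long bimodules over group algebras sends the component of degree
`(g₁,h₁) ⊗ (g₂,h₂)` into the component of degree
`(α₂β₁⁻¹(g₁) g₂ β₂β₁⁻¹(g₁⁻¹), h₂) ⊗ (g₁, γ₁δ₁⁻¹(h₂⁻¹) h₁ h₂)`. -/
theorem ydl_braiding_grading_groups
    {G₁ G₂ M N : Type*} [Group G₁] [Group G₂]
    (α₁ β₁ α₂ β₂ : G₁ ≃* G₁) (γ₁ δ₁ γ₂ δ₂ : G₂ ≃* G₂)
    -- left G₁-action and right G₂-action on M, forming a biset
    (lM : G₁ → M → M) (rM : M → G₂ → M)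
    (hlM₁ : ∀ m, lM 1 m = m) (hlM : ∀ g g' m, lM g (lM g' m) = lM (g * g') m)
    (hrM₁ : ∀ m, rM m 1 = m) (hrM : ∀ m h h', rM (rM m h) h' = rM m (h * h'))
    (hMc : ∀ g m h, rM (lM g m) h = lM g (rM m h))
    -- left G₁-action and right G₂-action on N, forming a biset
    (lN : G₁ → N → N) (rN : N → G₂ → N)
    (hlN₁ : ∀ n, lN 1 n = n) (hlN : ∀ g g' n, lN g (lN g' n) = lN (g * g') n)
    (hrN₁ : ∀ n, rN n 1 = n) (hrN : ∀ n h h', rN (rN n h) h' = rN n (h * h'))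
    (hNc : ∀ g n h, rN (lN g n) h = lN g (rN n h))
    -- gradings
    (Mc : G₁ → G₂ → Set M) (Nc : G₁ → G₂ → Set N)
    -- (α₁,β₁,γ₁,δ₁)-compatibility for M :
    (hM : ∀ g' h' g h m, m ∈ Mc g h →
      rM (lM g' m) h' ∈ Mc (α₁ g' * g * β₁ g'⁻¹) (γ₁ h'⁻¹ * h * δ₁ h'))
    -- left and right compatibility for N with (α₂,β₂,γ₂,δ₂) :
    (hNl : ∀ g a b n, n ∈ Nc a b → lN g n ∈ Nc (α₂ g * a * β₂ g⁻¹) b)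
    (hNr : ∀ h a b n, n ∈ Nc a b → rN n h ∈ Nc a (γ₂ h⁻¹ * b * δ₂ h)) :
    ∀ (g₁ : G₁) (h₁ : G₂) (g₂ : G₁) (h₂ : G₂) (m : M) (n : N),
      m ∈ Mc g₁ h₁ → n ∈ Nc g₂ h₂ →
      lN (β₁.symm g₁) n ∈
        Nc (α₂ (β₁.symm g₁) * g₂ * β₂ (β₁.symm g₁⁻¹)) h₂ ∧
      rM m (δ₁.symm h₂) ∈ Mc g₁ (γ₁ (δ₁.symm h₂⁻¹) * h₁ * h₂) :=
  ydl_braiding_grading_groups_general α₁ β₁ α₂ β₂ γ₁ δ₁ lM rM hlM₁ lN Mc Nc hM hNl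
end

section
/- Let H₁, H₂ be Hopf algebras with invertible antipodes S₁, S₂, and let M be an (α₁,β₁,γ₁,δ₁)- and N an (α₂,β₂,γ₂,δ₂)-Yetter-Drinfeld-Long bimodule. Define c(m ⊗ n) = β₁⁻¹(m₍₋₁₎) ▷ n₍₀₎ ⊗ m₍₀₎ ◁ δ₁⁻¹(n₍₁₎) and c'(n ⊗ m) = m₍₀₎ ◁ δ₁⁻¹(S₂⁻¹(n₍₁₎)) ⊗ β₁⁻¹(S₁⁻¹(m₍₋₁₎)) ▷ n₍₀₎. Then c' ∘ c = id_{M⊗N} and c ∘ c' = id_{N⊗M} (viewing the second factor with the twisted module structure as in the construction). -/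
open TensorProduct

/-- The structure maps of an `H₁`-`H₂`-bimodule-bicomodule: left `H₁`-action,
right `H₂`-action, left `H₁`-coaction and right `H₂`-coaction. -/
structure YDLStruct (k H₁ H₂ M : Type*) [Field k] [Ring H₁] [Ring H₂]
    [HopfAlgebra k H₁] [HopfAlgebra k H₂] [AddCommGroup M] [Module k M] where
  actL : H₁ ⊗[k] M →ₗ[k] M
  actR : M ⊗[k] H₂ →ₗ[k] M
  coL : M →ₗ[k] H₁ ⊗[k] M
  coR : M →ₗ[k] M ⊗[k] H₂

variable {k H₁ H₂ : Type*} [Field k] [Ring H₁] [Ring H₂]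
  [HopfAlgebra k H₁] [HopfAlgebra k H₂]

/-- `(h ⊗ m) ⊗ h' ↦ (h * h') ⊗ m`. -/
noncomputable def rmulL (k H M : Type*) [Field k] [Ring H] [HopfAlgebra k H]
    [AddCommGroup M] [Module k M] : (H ⊗[k] M) ⊗[k] H →ₗ[k] H ⊗[k] M :=
  TensorProduct.map (LinearMap.mul' k H) LinearMap.id ∘ₗ
    (TensorProduct.assoc k H H M).symm.toLinearMap ∘ₗ
    TensorProduct.map LinearMap.id (TensorProduct.comm k M H).toLinearMap ∘ₗ
    (TensorProduct.assoc k H M H).toLinearMap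

/-- `h ⊗ (m ⊗ h') ↦ m ⊗ (h * h')`. -/
noncomputable def lmulR (k H M : Type*) [Field k] [Ring H] [HopfAlgebra k H]
    [AddCommGroup M] [Module k M] : H ⊗[k] (M ⊗[k] H) →ₗ[k] M ⊗[k] H :=
  TensorProduct.map LinearMap.id (LinearMap.mul' k H) ∘ₗ
    (TensorProduct.assoc k M H H).toLinearMap ∘ₗ
    TensorProduct.map (TensorProduct.comm k H M).toLinearMap LinearMap.id ∘ₗ
    (TensorProduct.assoc k H M H).symm.toLinearMap

/-- `M` with structure maps `S` is an `(α, β, γ, δ)`-Yetter-Drinfeld-Long bimodule: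
it is an `H₁`-`H₂`-bimodule and `H₁`-`H₂`-bicomodule satisfying the four compatibility
conditions (2.1)–(2.4) (in Sweedler notation:
(2.1) `α(h₁)m₍₋₁₎ ⊗ h₂ ▷ m₍₀₎ = (h₁ ▷ m)₍₋₁₎ β(h₂) ⊗ (h₁ ▷ m)₍₀₎`;
(2.2) `(h ▷ m)₍₀₎ ⊗ (h ▷ m)₍₁₎ = h ▷ m₍₀₎ ⊗ m₍₁₎`;
(2.3) `m₍₀₎ ◁ h₁ ⊗ m₍₁₎ δ(h₂) = (m ◁ h₂)₍₀₎ ⊗ γ(h₁)(m ◁ h₂)₍₁₎`;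
(2.4) `(m ◁ h)₍₋₁₎ ⊗ (m ◁ h)₍₀₎ = m₍₋₁₎ ⊗ m₍₀₎ ◁ h`). -/
structure IsYDL (al be : H₁ →ₗ[k] H₁) (ga de : H₂ →ₗ[k] H₂)
    {M : Type*} [AddCommGroup M] [Module k M] (S : YDLStruct k H₁ H₂ M) : Prop where
  actL_one : ∀ m : M, S.actL (1 ⊗ₜ[k] m) = m
  actL_mul : ∀ (h h' : H₁) (m : M),
    S.actL ((h * h') ⊗ₜ[k] m) = S.actL (h ⊗ₜ[k] S.actL (h' ⊗ₜ[k] m))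
  actR_one : ∀ m : M, S.actR (m ⊗ₜ[k] 1) = m
  actR_mul : ∀ (m : M) (h h' : H₂),
    S.actR (S.actR (m ⊗ₜ[k] h) ⊗ₜ[k] h') = S.actR (m ⊗ₜ[k] (h * h'))
  act_bimod : ∀ (h : H₁) (m : M) (h'' : H₂),
    S.actR (S.actL (h ⊗ₜ[k] m) ⊗ₜ[k] h'') = S.actL (h ⊗ₜ[k] S.actR (m ⊗ₜ[k] h''))
  coL_counit : ∀ m : M,
    TensorProduct.lid k M (TensorProduct.map Coalgebra.counit LinearMap.id (S.coL m)) = m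
  coL_coassoc : ∀ m : M,
    TensorProduct.map Coalgebra.comul LinearMap.id (S.coL m) =
      (TensorProduct.assoc k H₁ H₁ M).symm
        (TensorProduct.map LinearMap.id S.coL (S.coL m))
  coR_counit : ∀ m : M,
    TensorProduct.rid k M (TensorProduct.map LinearMap.id Coalgebra.counit (S.coR m)) = m
  coR_coassoc : ∀ m : M,
    TensorProduct.map LinearMap.id Coalgebra.comul (S.coR m) =
      TensorProduct.assoc k M H₂ H₂
        (TensorProduct.map S.coR LinearMap.id (S.coR m))
  co_bicomod : ∀ m : M,
    TensorProduct.map LinearMap.id S.coR (S.coL m) =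
      TensorProduct.assoc k H₁ M H₂
        (TensorProduct.map S.coL LinearMap.id (S.coR m))
  ydL : ∀ (h : H₁) (m : M),
    TensorProduct.map (LinearMap.mul' k H₁ ∘ₗ TensorProduct.map al LinearMap.id) S.actL
      (TensorProduct.tensorTensorTensorComm k H₁ H₁ H₁ M
        (Coalgebra.comul (R := k) h ⊗ₜ[k] S.coL m)) =
    rmulL k H₁ M
      (TensorProduct.map (S.coL ∘ₗ S.actL ∘ₗ (TensorProduct.mk k H₁ M).flip m) be
        (Coalgebra.comul (R := k) h))
  longL : ∀ (h : H₁) (m : M),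
    S.coR (S.actL (h ⊗ₜ[k] m)) =
      TensorProduct.map (S.actL ∘ₗ TensorProduct.mk k H₁ M h) LinearMap.id (S.coR m)
  ydR : ∀ (m : M) (h : H₂),
    TensorProduct.map S.actR (LinearMap.mul' k H₂ ∘ₗ TensorProduct.map LinearMap.id de)
      (TensorProduct.tensorTensorTensorComm k M H₂ H₂ H₂
        (S.coR m ⊗ₜ[k] Coalgebra.comul (R := k) h)) =
    lmulR k H₂ M
      (TensorProduct.map ga (S.coR ∘ₗ S.actR ∘ₗ TensorProduct.mk k M H₂ m)
        (Coalgebra.comul (R := k) h))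
  longR : ∀ (m : M) (h : H₂),
    S.coL (S.actR (m ⊗ₜ[k] h)) =
      TensorProduct.map LinearMap.id (S.actR ∘ₗ (TensorProduct.mk k M H₂).flip h)
        (S.coL m)

/-- The braiding `c_{M,N}(m ⊗ n) = β₁⁻¹(m₍₋₁₎) ▷ n₍₀₎ ⊗ m₍₀₎ ◁ δ₁⁻¹(n₍₁₎)`, where
`bInv` and `dInv` are the maps `β₁⁻¹` and `δ₁⁻¹`. -/
noncomputable def braid {M N : Type*} [AddCommGroup M] [Module k M]
    [AddCommGroup N] [Module k N]
    (bInv : H₁ →ₗ[k] H₁) (dInv : H₂ →ₗ[k] H₂)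
    (SM : YDLStruct k H₁ H₂ M) (SN : YDLStruct k H₁ H₂ N) :
    M ⊗[k] N →ₗ[k] N ⊗[k] M :=
  TensorProduct.map (SN.actL ∘ₗ TensorProduct.map bInv LinearMap.id)
      (SM.actR ∘ₗ TensorProduct.map LinearMap.id dInv) ∘ₗ
    (TensorProduct.tensorTensorTensorComm k H₁ M N H₂).toLinearMap ∘ₗ
    TensorProduct.map SM.coL SN.coR

/-- The tensor product structure maps on `M ⊗ N`: here `u = α₂`, `v = α₂β₁α₂⁻¹`,
`w = γ₂`, `x = γ₂⁻¹δ₁γ₂`, so that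
`h ▷ (m⊗n) = h₁▷m ⊗ h₂▷n`, `(m⊗n)₍₋₁₎ ⊗ (m⊗n)₍₀₎ = u(m₍₋₁₎)v(n₍₋₁₎) ⊗ m₍₀₎⊗n₍₀₎`,
`(m⊗n)◁h = m◁w(h₁) ⊗ n◁x(h₂)`, `(m⊗n)₍₀₎ ⊗ (m⊗n)₍₁₎ = m₍₀₎⊗n₍₀₎ ⊗ m₍₁₎n₍₁₎`. -/
noncomputable def tensorYDL {M N : Type*} [AddCommGroup M] [Module k M]
    [AddCommGroup N] [Module k N]
    (u v : H₁ →ₗ[k] H₁) (w x : H₂ →ₗ[k] H₂)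
    (SM : YDLStruct k H₁ H₂ M) (SN : YDLStruct k H₁ H₂ N) :
    YDLStruct k H₁ H₂ (M ⊗[k] N) where
  actL := TensorProduct.map SM.actL SN.actL ∘ₗ
    (TensorProduct.tensorTensorTensorComm k H₁ H₁ M N).toLinearMap ∘ₗ
    TensorProduct.map Coalgebra.comul LinearMap.id
  actR := TensorProduct.map SM.actR SN.actR ∘ₗ
    (TensorProduct.tensorTensorTensorComm k M N H₂ H₂).toLinearMap ∘ₗ
    TensorProduct.map LinearMap.id
      (TensorProduct.map w x ∘ₗ (Coalgebra.comul : H₂ →ₗ[k] H₂ ⊗[k] H₂))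
  coL := TensorProduct.map (LinearMap.mul' k H₁ ∘ₗ TensorProduct.map u v) LinearMap.id ∘ₗ
    (TensorProduct.tensorTensorTensorComm k H₁ M H₁ N).toLinearMap ∘ₗ
    TensorProduct.map SM.coL SN.coL
  coR := TensorProduct.map LinearMap.id (LinearMap.mul' k H₂) ∘ₗ
    (TensorProduct.tensorTensorTensorComm k M H₂ N H₂).toLinearMap ∘ₗ
    TensorProduct.map SM.coR SN.coR

/-- The twisted structure on `N`: `u = β₁⁻¹α₁`, `v = α₁⁻¹α₂β₁α₂⁻¹`,
`w = γ₂⁻¹δ₁γ₂γ₁⁻¹`, `x = γ₁δ₁⁻¹`, so that `h ⇀ n = u(h) ▷ n`,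
`n ↦ v(n₍₋₁₎) ⊗ n₍₀₎`, `n ↼ h = n ◁ w(h)`, `n ↦ n₍₀₎ ⊗ x(n₍₁₎)`. -/
noncomputable def twistYDL {N : Type*} [AddCommGroup N] [Module k N]
    (u v : H₁ →ₗ[k] H₁) (w x : H₂ →ₗ[k] H₂) (SN : YDLStruct k H₁ H₂ N) :
    YDLStruct k H₁ H₂ N where
  actL := SN.actL ∘ₗ TensorProduct.map u LinearMap.id
  actR := SN.actR ∘ₗ TensorProduct.map LinearMap.id w
  coL := TensorProduct.map v LinearMap.id ∘ₗ SN.coL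
  coR := TensorProduct.map LinearMap.id x ∘ₗ SN.coR

/-- The map `c'(n ⊗ m) = m₍₀₎ ◁ dInvS(n₍₁₎) ⊗ bInvS(m₍₋₁₎) ▷ n₍₀₎`, where
`bInvS = β₁⁻¹S₁⁻¹` and `dInvS = δ₁⁻¹S₂⁻¹`. -/
noncomputable def braidInv {k H₁ H₂ : Type*} [Field k] [Ring H₁] [Ring H₂]
    [HopfAlgebra k H₁] [HopfAlgebra k H₂]
    {M N : Type*} [AddCommGroup M] [Module k M] [AddCommGroup N] [Module k N]
    (bInvS : H₁ →ₗ[k] H₁) (dInvS : H₂ →ₗ[k] H₂)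
    (SM : YDLStruct k H₁ H₂ M) (SN : YDLStruct k H₁ H₂ N) :
    N ⊗[k] M →ₗ[k] M ⊗[k] N :=
  TensorProduct.map
      (SM.actR ∘ₗ TensorProduct.map LinearMap.id dInvS ∘ₗ
        (TensorProduct.comm k H₂ M).toLinearMap)
      (SN.actL ∘ₗ TensorProduct.map bInvS LinearMap.id ∘ₗ
        (TensorProduct.comm k N H₁).toLinearMap) ∘ₗ
    (TensorProduct.comm k (N ⊗[k] H₁) (H₂ ⊗[k] M)).toLinearMap ∘ₗ
    (TensorProduct.tensorTensorTensorComm k N H₂ H₁ M).toLinearMap ∘ₗ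
    TensorProduct.map SN.coR SM.coL

/-! Expanding `c' (c (m ⊗ n))` with the conditions (2.2), (2.4) and coassociativity gives
`m₍₀₎ ◁ δ₁⁻¹(n₍₂₎ S₂⁻¹(n₍₁₎)) ⊗ β₁⁻¹(S₁⁻¹(m₍₋₁₎) m₍₋₂₎) ▷ n₍₀₎`, which collapses to `m ⊗ n`
because `h₂ S⁻¹(h₁) = S⁻¹(h₂) h₁ = ε(h) 1`: apply the anti-multiplicative, injective `S`.
Up to the flips `M ⊗ N ≅ N ⊗ M`, `c'` is `c` built from `β₁⁻¹S₁⁻¹` and `δ₁⁻¹S₂⁻¹`, so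
`c ∘ c' = id` is the same computation with the two pairs of maps exchanged. -/

section AntipodeInverse

open Coalgebra (comul counit)
open HopfAlgebra (antipode)

variable {R H A : Type*} [CommSemiring R] [Semiring H] [HopfAlgebra R H] [Semiring A]
  [Algebra R A] {Sinv : H →ₗ[R] H}

lemma antipodeInv_algebraMap (hS : ∀ h : H, Sinv (antipode R h) = h) (r : R) :
    Sinv (algebraMap R H r) = algebraMap R H r := by
  have h1 : Sinv 1 = 1 := by simpa using hS 1
  rw [Algebra.algebraMap_eq_smul_one, map_smul, h1]

lemma mul'_map_antipodeInv_id_comm_comul (hS : ∀ h : H, Sinv (antipode R h) = h)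
    (hS' : ∀ h : H, antipode R (Sinv h) = h) (h : H) :
    LinearMap.mul' R H (map Sinv LinearMap.id (TensorProduct.comm R H H (comul h))) =
      algebraMap R H (counit h) := by
  have hanti : antipode R ∘ₗ LinearMap.mul' R H ∘ₗ map Sinv LinearMap.id ∘ₗ
      (TensorProduct.comm R H H).toLinearMap = LinearMap.mul' R H ∘ₗ (antipode R).rTensor H := by
    ext x y
    simp [HopfAlgebra.antipode_mul_antidistrib, hS']
  rw [← hS (LinearMap.mul' R H _), ← antipodeInv_algebraMap hS,
    ← HopfAlgebra.mul_antipode_rTensor_comul_apply]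
  exact congr(Sinv ($hanti (comul h)))

lemma mul'_map_id_antipodeInv_comm_comul (hS : ∀ h : H, Sinv (antipode R h) = h)
    (hS' : ∀ h : H, antipode R (Sinv h) = h) (h : H) :
    LinearMap.mul' R H (map LinearMap.id Sinv (TensorProduct.comm R H H (comul h))) =
      algebraMap R H (counit h) := by
  have hanti : antipode R ∘ₗ LinearMap.mul' R H ∘ₗ map LinearMap.id Sinv ∘ₗ
      (TensorProduct.comm R H H).toLinearMap = LinearMap.mul' R H ∘ₗ (antipode R).lTensor H := by
    ext x y
    simp [HopfAlgebra.antipode_mul_antidistrib, hS']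
  rw [← hS (LinearMap.mul' R H _), ← antipodeInv_algebraMap hS,
    ← HopfAlgebra.mul_antipode_lTensor_comul_apply]
  exact congr(Sinv ($hanti (comul h)))

lemma AlgHom.mul'_map_comp_antipodeInv_id_comm_comul (f : H →ₐ[R] A)
    (hS : ∀ h : H, Sinv (antipode R h) = h) (hS' : ∀ h : H, antipode R (Sinv h) = h) (h : H) :
    LinearMap.mul' R A (map (f.toLinearMap ∘ₗ Sinv) f.toLinearMap
      (TensorProduct.comm R H H (comul h))) = algebraMap R A (counit h) := by
  have hf : LinearMap.mul' R A ∘ₗ map (f.toLinearMap ∘ₗ Sinv) f.toLinearMap =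
      f.toLinearMap ∘ₗ LinearMap.mul' R H ∘ₗ map Sinv LinearMap.id := by
    ext x y
    simp
  rw [← f.commutes, ← mul'_map_antipodeInv_id_comm_comul hS hS']
  exact congr($hf _)

lemma AlgHom.mul'_map_id_comp_antipodeInv_comm_comul (f : H →ₐ[R] A)
    (hS : ∀ h : H, Sinv (antipode R h) = h) (hS' : ∀ h : H, antipode R (Sinv h) = h) (h : H) :
    LinearMap.mul' R A (map f.toLinearMap (f.toLinearMap ∘ₗ Sinv)
      (TensorProduct.comm R H H (comul h))) = algebraMap R A (counit h) := by
  have hf : LinearMap.mul' R A ∘ₗ map f.toLinearMap (f.toLinearMap ∘ₗ Sinv) =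
      f.toLinearMap ∘ₗ LinearMap.mul' R H ∘ₗ map LinearMap.id Sinv := by
    ext x y
    simp
  rw [← f.commutes, ← mul'_map_id_antipodeInv_comm_comul hS hS']
  exact congr($hf _)

end AntipodeInverse

section Braiding

open Coalgebra (comul counit)

variable {M N : Type*} [AddCommGroup M] [Module k M] [AddCommGroup N] [Module k N]
  {SM : YDLStruct k H₁ H₂ M} {SN : YDLStruct k H₁ H₂ N}

noncomputable def twistedAct (b b' : H₁ →ₗ[k] H₁) (d d' : H₂ →ₗ[k] H₂)
    (SM : YDLStruct k H₁ H₂ M) (SN : YDLStruct k H₁ H₂ N) :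
    ((H₁ ⊗[k] H₁) ⊗[k] M) ⊗[k] (N ⊗[k] (H₂ ⊗[k] H₂)) →ₗ[k] M ⊗[k] N :=
  (TensorProduct.comm k N M).toLinearMap ∘ₗ
    map
      (SN.actL ∘ₗ map (LinearMap.mul' k H₁ ∘ₗ map b' b ∘ₗ
        (TensorProduct.comm k H₁ H₁).toLinearMap) LinearMap.id)
      (SM.actR ∘ₗ map LinearMap.id (LinearMap.mul' k H₂ ∘ₗ map d d' ∘ₗ
        (TensorProduct.comm k H₂ H₂).toLinearMap)) ∘ₗ
    (tensorTensorTensorComm k (H₁ ⊗[k] H₁) M N (H₂ ⊗[k] H₂)).toLinearMap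

@[simp]
lemma twistedAct_tmul (b b' : H₁ →ₗ[k] H₁) (d d' : H₂ →ₗ[k] H₂) (h h' : H₁) (m : M) (n : N)
    (t t' : H₂) :
    twistedAct b b' d d' SM SN (((h ⊗ₜ h') ⊗ₜ m) ⊗ₜ (n ⊗ₜ (t ⊗ₜ t'))) =
      SM.actR (m ⊗ₜ (d t' * d' t)) ⊗ₜ SN.actL ((b' h' * b h) ⊗ₜ n) := by
  simp [twistedAct]

variable {al₁ be₁ al₂ be₂ : H₁ →ₗ[k] H₁} {ga₁ de₁ ga₂ de₂ : H₂ →ₗ[k] H₂}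

lemma braidInv_braid_tmul (hM : IsYDL al₁ be₁ ga₁ de₁ SM) (hN : IsYDL al₂ be₂ ga₂ de₂ SN)
    (b b' : H₁ →ₗ[k] H₁) (d d' : H₂ →ₗ[k] H₂) (m : M) (n : N) :
    braidInv b' d' SM SN (braid b d SM SN (m ⊗ₜ n)) =
      twistedAct b b' d d' SM SN
        ((TensorProduct.assoc k H₁ H₁ M).symm (map LinearMap.id SM.coL (SM.coL m)) ⊗ₜ
          TensorProduct.assoc k N H₂ H₂ (map SN.coR LinearMap.id (SN.coR n))) := by
  simp only [braid, LinearMap.comp_apply, map_tmul]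
  generalize SM.coL m = Z
  generalize SN.coR n = W
  induction Z using TensorProduct.induction_on with
  | zero => simp
  | add Z₁ Z₂ h₁ h₂ => simp_all [add_tmul]
  | tmul h m₀ =>
    induction W using TensorProduct.induction_on with
    | zero => simp
    | add W₁ W₂ h₁ h₂ => simp_all [tmul_add]
    | tmul n₀ t =>
      simp only [tensorTensorTensorComm_tmul, map_tmul, braidInv, LinearMap.comp_apply,
        LinearEquiv.coe_coe]
      rw [hN.longL, hM.longR]
      generalize SM.coL m₀ = X
      generalize SN.coR n₀ = Y
      induction X using TensorProduct.induction_on with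
      | zero => simp
      | add X₁ X₂ h₁ h₂ => simp_all [add_tmul, tmul_add]
      | tmul h' m' =>
        induction Y using TensorProduct.induction_on with
        | zero => simp
        | add Y₁ Y₂ h₁ h₂ => simp_all [add_tmul, tmul_add]
        | tmul n' t' => simp [hM.actR_mul, hN.actL_mul]

lemma twistedAct_comul_tmul_comul (hM : IsYDL al₁ be₁ ga₁ de₁ SM)
    (hN : IsYDL al₂ be₂ ga₂ de₂ SN) {b b' : H₁ →ₗ[k] H₁} {d d' : H₂ →ₗ[k] H₂}
    (hb : ∀ h : H₁, LinearMap.mul' k H₁ (map b' b (TensorProduct.comm k H₁ H₁ (comul h))) =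
      algebraMap k H₁ (counit h))
    (hd : ∀ t : H₂, LinearMap.mul' k H₂ (map d d' (TensorProduct.comm k H₂ H₂ (comul t))) =
      algebraMap k H₂ (counit t))
    (Z : H₁ ⊗[k] M) (W : N ⊗[k] H₂) :
    twistedAct b b' d d' SM SN (map comul LinearMap.id Z ⊗ₜ map LinearMap.id comul W) =
      TensorProduct.lid k M (map counit LinearMap.id Z) ⊗ₜ
        TensorProduct.rid k N (map LinearMap.id counit W) := by
  induction Z using TensorProduct.induction_on with
  | zero => simp
  | add Z₁ Z₂ h₁ h₂ => simp_all [add_tmul]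
  | tmul h m =>
    induction W using TensorProduct.induction_on with
    | zero => simp
    | add W₁ W₂ h₁ h₂ => simp_all [tmul_add]
    | tmul n t =>
      simp [twistedAct, hb, hd, Algebra.algebraMap_eq_smul_one, ← smul_tmul', hM.actR_one,
        hN.actL_one]

lemma braidInv_comp_braid (hM : IsYDL al₁ be₁ ga₁ de₁ SM) (hN : IsYDL al₂ be₂ ga₂ de₂ SN)
    {b b' : H₁ →ₗ[k] H₁} {d d' : H₂ →ₗ[k] H₂}
    (hb : ∀ h : H₁, LinearMap.mul' k H₁ (map b' b (TensorProduct.comm k H₁ H₁ (comul h))) =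
      algebraMap k H₁ (counit h))
    (hd : ∀ t : H₂, LinearMap.mul' k H₂ (map d d' (TensorProduct.comm k H₂ H₂ (comul t))) =
      algebraMap k H₂ (counit t)) :
    braidInv b' d' SM SN ∘ₗ braid b d SM SN = LinearMap.id := by
  refine TensorProduct.ext' fun m n => ?_
  rw [LinearMap.comp_apply, braidInv_braid_tmul hM hN, ← hM.coL_coassoc, ← hN.coR_coassoc,
    twistedAct_comul_tmul_comul hM hN hb hd, hM.coL_counit, hN.coR_counit, LinearMap.id_apply]

lemma braidInv_eq_comm_comp_braid_comp_comm (b : H₁ →ₗ[k] H₁) (d : H₂ →ₗ[k] H₂) :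
    braidInv b d SM SN = (TensorProduct.comm k N M).toLinearMap ∘ₗ braid b d SM SN ∘ₗ
      (TensorProduct.comm k N M).toLinearMap := by
  refine TensorProduct.ext' fun n m => ?_
  simp only [braid, braidInv, LinearMap.comp_apply, LinearEquiv.coe_coe, TensorProduct.comm_tmul,
    map_tmul]
  generalize SN.coR n = W
  generalize SM.coL m = Z
  induction W using TensorProduct.induction_on with
  | zero => simp
  | add W₁ W₂ h₁ h₂ => simp_all [add_tmul, tmul_add]
  | tmul n₀ t =>
    induction Z using TensorProduct.induction_on with
    | zero => simp
    | add Z₁ Z₂ h₁ h₂ => simp_all [add_tmul, tmul_add]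
    | tmul h m₀ => simp

lemma braid_comp_braidInv (hM : IsYDL al₁ be₁ ga₁ de₁ SM) (hN : IsYDL al₂ be₂ ga₂ de₂ SN)
    {b b' : H₁ →ₗ[k] H₁} {d d' : H₂ →ₗ[k] H₂}
    (hb : ∀ h : H₁, LinearMap.mul' k H₁ (map b b' (TensorProduct.comm k H₁ H₁ (comul h))) =
      algebraMap k H₁ (counit h))
    (hd : ∀ t : H₂, LinearMap.mul' k H₂ (map d' d (TensorProduct.comm k H₂ H₂ (comul t))) =
      algebraMap k H₂ (counit t)) :
    braid b d SM SN ∘ₗ braidInv b' d' SM SN = LinearMap.id := by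
  refine TensorProduct.ext' fun n m => ?_
  have h := congr(TensorProduct.comm k M N ($(braidInv_comp_braid hM hN hb hd) (m ⊗ₜ n)))
  simpa [braidInv_eq_comm_comp_braid_comp_comm] using h

end Braiding

/-- the braiding `c(m ⊗ n) = β₁⁻¹(m₍₋₁₎) ▷ n₍₀₎ ⊗ m₍₀₎ ◁ δ₁⁻¹(n₍₁₎)` is
invertible with inverse `c'(n ⊗ m) = m₍₀₎ ◁ δ₁⁻¹(S₂⁻¹(n₍₁₎)) ⊗ β₁⁻¹(S₁⁻¹(m₍₋₁₎)) ▷ n₍₀₎`. -/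
theorem braid_inverse {k H₁ H₂ M N : Type*} [Field k] [Ring H₁] [Ring H₂]
    [HopfAlgebra k H₁] [HopfAlgebra k H₂]
    [AddCommGroup M] [Module k M] [AddCommGroup N] [Module k N]
    (S₁inv : H₁ →ₗ[k] H₁) (S₂inv : H₂ →ₗ[k] H₂)
    (hS₁ : ∀ h : H₁, S₁inv (HopfAlgebra.antipode (R := k) h) = h)
    (hS₁' : ∀ h : H₁, HopfAlgebra.antipode (R := k) (S₁inv h) = h)
    (hS₂ : ∀ h : H₂, S₂inv (HopfAlgebra.antipode (R := k) h) = h)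
    (hS₂' : ∀ h : H₂, HopfAlgebra.antipode (R := k) (S₂inv h) = h)
    (α₁ β₁ α₂ β₂ : H₁ ≃ₐc[k] H₁) (γ₁ δ₁ γ₂ δ₂ : H₂ ≃ₐc[k] H₂)
    (SM : YDLStruct k H₁ H₂ M) (SN : YDLStruct k H₁ H₂ N)
    (hM : IsYDL α₁.toLinearMap β₁.toLinearMap γ₁.toLinearMap δ₁.toLinearMap SM)
    (hN : IsYDL α₂.toLinearMap β₂.toLinearMap γ₂.toLinearMap δ₂.toLinearMap SN) :
    braidInv (β₁.symm.toLinearMap ∘ₗ S₁inv) (δ₁.symm.toLinearMap ∘ₗ S₂inv) SM SN ∘ₗ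
        braid β₁.symm.toLinearMap δ₁.symm.toLinearMap SM SN =
      LinearMap.id ∧
    braid β₁.symm.toLinearMap δ₁.symm.toLinearMap SM SN ∘ₗ
        braidInv (β₁.symm.toLinearMap ∘ₗ S₁inv) (δ₁.symm.toLinearMap ∘ₗ S₂inv) SM SN =
      LinearMap.id := by
  let b : H₁ →ₐ[k] H₁ := (β₁.symm : H₁ ≃ₐ[k] H₁)
  let d : H₂ →ₐ[k] H₂ := (δ₁.symm : H₂ ≃ₐ[k] H₂)
  exact ⟨braidInv_comp_braid hM hN (b.mul'_map_comp_antipodeInv_id_comm_comul hS₁ hS₁')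
      (d.mul'_map_id_comp_antipodeInv_comm_comul hS₂ hS₂'),
    braid_comp_braidInv hM hN (b.mul'_map_id_comp_antipodeInv_comm_comul hS₁ hS₁')
      (d.mul'_map_comp_antipodeInv_id_comm_comul hS₂ hS₂')⟩
end

section
/- Let H₁, H₂ be Hopf algebras and M an (α₁,β₁,γ₁,δ₁)-, N an (α₂,β₂,γ₂,δ₂)-, P an (α₃,β₃,γ₃,δ₃)-Yetter-Drinfeld-Long bimodule. Then the braidings satisfy the hexagon-type identity c_{M⊗N,P} = (c_{M, ᴺP} ⊗ id_N) ∘ (id_M ⊗ c_{N,P}), where c_{X,Y}(x⊗y) = β_X⁻¹(x₍₋₁₎) ▷ y₍₀₎ ⊗ x₍₀₎ ◁ δ_X⁻¹(y₍₁₎), with (α_X, β_X, γ_X, δ_X) the parameters of X, and the tensor product M ⊗ N carries parameters (α₂α₁, α₂β₁α₂⁻¹β₂, γ₁γ₂, δ₂γ₂⁻¹δ₁γ₂) with structures as in the T-category construction. -/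
/-! In Sweedler notation both sides of the hexagon send `(m ⊗ n) ⊗ p` to
`β₂⁻¹α₂β₁⁻¹(m₍₋₁₎) β₂⁻¹(n₍₋₁₎) ▷ p₍₀₎ ⊗ (m₍₀₎ ◁ δ₁⁻¹γ₂δ₂⁻¹(p₍₁₎) ⊗ n₍₀₎ ◁ δ₂⁻¹(p₍₂₎))`.
For `c_{M⊗N,P}` this is the (co)multiplicativity of the parameter maps, which splits the
action of `p₍₁₎` on `m₍₀₎ ⊗ n₍₀₎`. For the composite of `c_{N,P}` and `c_{M,ᴺP}`, the second
braiding sees the coaction of `β₂⁻¹(n₍₋₁₎) ▷ p₍₀₎`, which is `β₂⁻¹(n₍₋₁₎) ▷ p₍₀₎₍₀₎ ⊗ p₍₀₎₍₁₎`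
by (2.2); the two actions on `p` then combine because `P` is a module, and coassociativity of
the right coaction of `P` identifies `p₍₀₎₍₀₎ ⊗ p₍₀₎₍₁₎ ⊗ p₍₁₎` with `p₍₀₎ ⊗ p₍₁₎₍₁₎ ⊗ p₍₁₎₍₂₎`. -/

open TensorProduct

variable {k H₁ H₂ : Type*} [Field k] [Ring H₁] [Ring H₂]
  [HopfAlgebra k H₁] [HopfAlgebra k H₂]

@[simp]
theorem BialgEquiv.toLinearMap_apply {R A B : Type*} [CommSemiring R] [Semiring A] [Semiring B]
    [Bialgebra R A] [Bialgebra R B] (e : A ≃ₐc[R] B) (x : A) : e.toLinearMap x = e x := rfl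

section Hexagon

variable {M N P : Type*} [AddCommGroup M] [Module k M] [AddCommGroup N] [Module k N]
  [AddCommGroup P] [Module k P]
  (SM : YDLStruct k H₁ H₂ M) (SN : YDLStruct k H₁ H₂ N) (SP : YDLStruct k H₁ H₂ P)

open LinearMap

noncomputable def jointAct (bM bN : H₁ →ₗ[k] H₁) (dM dN : H₂ →ₗ[k] H₂) :
    ((H₁ ⊗[k] M) ⊗[k] (H₁ ⊗[k] N)) ⊗[k] (P ⊗[k] (H₂ ⊗[k] H₂)) →ₗ[k] P ⊗[k] (M ⊗[k] N) :=
  map SP.actL (map SM.actR SN.actR ∘ₗ (tensorTensorTensorComm k M N H₂ H₂).toLinearMap ∘ₗ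
      map id (map dM dN)) ∘ₗ
    (tensorTensorTensorComm k H₁ (M ⊗[k] N) P (H₂ ⊗[k] H₂)).toLinearMap ∘ₗ
    map (map (mul' k H₁ ∘ₗ map bM bN) id ∘ₗ (tensorTensorTensorComm k H₁ M H₁ N).toLinearMap) id

@[simp]
theorem jointAct_tmul (bM bN : H₁ →ₗ[k] H₁) (dM dN : H₂ →ₗ[k] H₂)
    (h h' : H₁) (m : M) (n : N) (p : P) (c c' : H₂) :
    jointAct SM SN SP bM bN dM dN (((h ⊗ₜ m) ⊗ₜ (h' ⊗ₜ n)) ⊗ₜ (p ⊗ₜ (c ⊗ₜ c'))) =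
      SP.actL ((bM h * bN h') ⊗ₜ p) ⊗ₜ (SM.actR (m ⊗ₜ dM c) ⊗ₜ SN.actR (n ⊗ₜ dN c')) :=
  rfl

theorem braid_tensorYDL_tmul (b u v bM bN : H₁ →ₗ[k] H₁) (d w x : H₂ →ₗ[k] H₂)
    (hb : ∀ h h', b (u h * v h') = bM h * bN h')
    (hd : ∀ c, Coalgebra.comul (R := k) (d c) = map d d (Coalgebra.comul c))
    (m : M) (n : N) (p : P) :
    braid b d (tensorYDL u v w x SM SN) SP ((m ⊗ₜ n) ⊗ₜ p) =
      jointAct SM SN SP bM bN (w ∘ₗ d) (x ∘ₗ d)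
        ((SM.coL m ⊗ₜ SN.coL n) ⊗ₜ map id Coalgebra.comul (SP.coR p)) := by
  simp only [braid, tensorYDL, coe_comp, LinearEquiv.coe_coe, Function.comp_apply, map_tmul]
  generalize SM.coL m = X
  generalize SN.coL n = Y
  generalize SP.coR p = Z
  induction X with
  | zero => simp
  | add X X' hX hX' => simp only [add_tmul, map_add, hX, hX']
  | tmul h m' =>
    induction Y with
    | zero => simp
    | add Y Y' hY hY' => simp only [tmul_add, add_tmul, map_add, hY, hY']
    | tmul h' n' =>
      induction Z with
      | zero => simp
      | add Z Z' hZ hZ' => simp only [tmul_add, map_add, hZ, hZ']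
      | tmul p c =>
        simp only [map_tmul, coe_comp, LinearEquiv.coe_coe, Function.comp_apply,
          tensorTensorTensorComm_tmul, mul'_apply, hb, hd]
        induction Coalgebra.comul (R := k) c with
        | zero => simp
        | add T T' hT hT' => simp only [tmul_add, map_add, hT, hT']
        | tmul c₁ c₂ => rfl

variable {SP} in
theorem braid_comp_braid_tmul {al be : H₁ →ₗ[k] H₁} {ga de : H₂ →ₗ[k] H₂}
    (hP : IsYDL al be ga de SP)
    (bM bN : H₁ →ₗ[k] H₁) (dM dN : H₂ →ₗ[k] H₂) (m : M) (n : N) (p : P) :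
    ((TensorProduct.assoc k P M N).toLinearMap ∘ₗ map (braid bM dM SM SP) id ∘ₗ
        (TensorProduct.assoc k M P N).symm.toLinearMap ∘ₗ map id (braid bN dN SN SP) ∘ₗ
        (TensorProduct.assoc k M N P).toLinearMap) ((m ⊗ₜ n) ⊗ₜ p) =
      jointAct SM SN SP bM bN dM dN
        ((SM.coL m ⊗ₜ SN.coL n) ⊗ₜ TensorProduct.assoc k P H₂ H₂ (map SP.coR id (SP.coR p))) := by
  simp only [braid, coe_comp, LinearEquiv.coe_coe, Function.comp_apply, map_tmul, assoc_tmul]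
  generalize SN.coL n = Y
  generalize SP.coR p = Z
  induction Y with
  | zero => simp
  | add Y Y' hY hY' => simp only [tmul_add, add_tmul, map_add, hY, hY']
  | tmul h' n' =>
    induction Z with
    | zero => simp
    | add Z Z' hZ hZ' => simp only [tmul_add, map_add, hZ, hZ']
    | tmul p c =>
      simp only [map_tmul, coe_comp, LinearEquiv.coe_coe, Function.comp_apply,
        tensorTensorTensorComm_tmul, assoc_symm_tmul, id_coe, id_eq, hP.longL]
      generalize SM.coL m = X
      generalize SP.coR p = W
      induction X with
      | zero => simp
      | add X X' hX hX' => simp only [add_tmul, map_add, hX, hX']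
      | tmul h m' =>
        induction W with
        | zero => simp
        | add W W' hW hW' => simp only [tmul_add, add_tmul, map_add, hW, hW']
        | tmul p' c' =>
          simp [hP.actL_mul]

theorem braid_twistYDL (bM u v : H₁ →ₗ[k] H₁) (dM w x : H₂ →ₗ[k] H₂) :
    braid bM dM SM (twistYDL u v w x SP) = braid (u ∘ₗ bM) (dM ∘ₗ x) SM SP := by
  refine TensorProduct.ext' fun m p => ?_
  simp only [braid, twistYDL, coe_comp, LinearEquiv.coe_coe, Function.comp_apply, map_tmul]
  induction SM.coL m with
  | zero => simp
  | add X X' hX hX' => simp only [add_tmul, map_add, hX, hX']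
  | tmul h m' =>
    induction SP.coR p with
    | zero => simp
    | add Z Z' hZ hZ' => simp only [tmul_add, map_add, hZ, hZ']
    | tmul p' c => rfl

variable {SP} in
theorem braid_tensorYDL {al be : H₁ →ₗ[k] H₁} {ga de : H₂ →ₗ[k] H₂}
    (hP : IsYDL al be ga de SP)
    (b u v bM bN : H₁ →ₗ[k] H₁) (d w x dM dN : H₂ →ₗ[k] H₂)
    (hb : ∀ h h', b (u h * v h') = bM h * bN h')
    (hd : ∀ c, Coalgebra.comul (R := k) (d c) = map d d (Coalgebra.comul c))
    (hw : w ∘ₗ d = dM) (hx : x ∘ₗ d = dN) :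
    braid b d (tensorYDL u v w x SM SN) SP =
      (TensorProduct.assoc k P M N).toLinearMap ∘ₗ map (braid bM dM SM SP) id ∘ₗ
        (TensorProduct.assoc k M P N).symm.toLinearMap ∘ₗ map id (braid bN dN SN SP) ∘ₗ
        (TensorProduct.assoc k M N P).toLinearMap :=
  TensorProduct.ext_threefold fun m n p => by
    rw [braid_tensorYDL_tmul SM SN SP b u v bM bN d w x hb hd, hw, hx, hP.coR_coassoc,
      braid_comp_braid_tmul SM SN hP]

end Hexagon

theorem braid_hexagon_general {k H₁ H₂ M N P : Type*} [Field k] [Ring H₁] [Ring H₂]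
    [HopfAlgebra k H₁] [HopfAlgebra k H₂]
    [AddCommGroup M] [Module k M] [AddCommGroup N] [Module k N]
    [AddCommGroup P] [Module k P]
    (β₁ α₂ β₂ α₃ β₃ : H₁ ≃ₐc[k] H₁) (δ₁ γ₂ δ₂ γ₃ δ₃ : H₂ ≃ₐc[k] H₂)
    (SM : YDLStruct k H₁ H₂ M) (SN : YDLStruct k H₁ H₂ N) (SP : YDLStruct k H₁ H₂ P)
    (hP : IsYDL α₃.toLinearMap β₃.toLinearMap γ₃.toLinearMap δ₃.toLinearMap SP) :
    -- `c_{M⊗N,P}`, computed from the parameters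
    -- `(α₂α₁, α₂β₁α₂⁻¹β₂, γ₁γ₂, δ₂γ₂⁻¹δ₁γ₂)` of `M ⊗ N`
    braid
        (β₂.symm.toLinearMap ∘ₗ α₂.toLinearMap ∘ₗ β₁.symm.toLinearMap ∘ₗ
          α₂.symm.toLinearMap)
        (γ₂.symm.toLinearMap ∘ₗ δ₁.symm.toLinearMap ∘ₗ γ₂.toLinearMap ∘ₗ
          δ₂.symm.toLinearMap)
        (tensorYDL (α₂.toLinearMap)
          (α₂.toLinearMap ∘ₗ β₁.toLinearMap ∘ₗ α₂.symm.toLinearMap)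
          (γ₂.toLinearMap)
          (γ₂.symm.toLinearMap ∘ₗ δ₁.toLinearMap ∘ₗ γ₂.toLinearMap) SM SN) SP =
      (TensorProduct.assoc k P M N).toLinearMap ∘ₗ
        TensorProduct.map
          -- `c_{M,ᴺP}`, with `ᴺP` the twist of `P` by the parameters of `N`
          (braid β₁.symm.toLinearMap δ₁.symm.toLinearMap SM
            (twistYDL (β₂.symm.toLinearMap ∘ₗ α₂.toLinearMap)
              (α₂.symm.toLinearMap ∘ₗ α₃.toLinearMap ∘ₗ β₂.toLinearMap ∘ₗ
                α₃.symm.toLinearMap)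
              (γ₃.symm.toLinearMap ∘ₗ δ₂.toLinearMap ∘ₗ γ₃.toLinearMap ∘ₗ
                γ₂.symm.toLinearMap)
              (γ₂.toLinearMap ∘ₗ δ₂.symm.toLinearMap) SP))
          LinearMap.id ∘ₗ
        (TensorProduct.assoc k M P N).symm.toLinearMap ∘ₗ
        TensorProduct.map LinearMap.id
          (braid β₂.symm.toLinearMap δ₂.symm.toLinearMap SN SP) ∘ₗ
        (TensorProduct.assoc k M N P).toLinearMap := by
  rw [braid_twistYDL]
  refine braid_tensorYDL SM SN hP _ _ _ _ _ _ _ _ _ _ (fun h h' => ?_) (fun c => ?_) ?_ ?_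
  · simp only [LinearMap.coe_comp, Function.comp_apply, BialgEquiv.toLinearMap_apply]
    simp
  · simp only [TensorProduct.map_comp, LinearMap.coe_comp, Function.comp_apply,
      BialgEquiv.toLinearMap_apply, ← CoalgHomClass.map_comp_comul_apply]
    rfl
  all_goals ext c; simp

/-- the hexagon-type identity
`c_{M⊗N,P} = (c_{M,ᴺP} ⊗ id_N) ∘ (id_M ⊗ c_{N,P})` (up to the associativity
isomorphisms of the tensor product of vector spaces). -/
theorem braid_hexagon {k H₁ H₂ M N P : Type*} [Field k] [Ring H₁] [Ring H₂]
    [HopfAlgebra k H₁] [HopfAlgebra k H₂]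
    [AddCommGroup M] [Module k M] [AddCommGroup N] [Module k N]
    [AddCommGroup P] [Module k P]
    (α₁ β₁ α₂ β₂ α₃ β₃ : H₁ ≃ₐc[k] H₁) (γ₁ δ₁ γ₂ δ₂ γ₃ δ₃ : H₂ ≃ₐc[k] H₂)
    (SM : YDLStruct k H₁ H₂ M) (SN : YDLStruct k H₁ H₂ N) (SP : YDLStruct k H₁ H₂ P)
    (hM : IsYDL α₁.toLinearMap β₁.toLinearMap γ₁.toLinearMap δ₁.toLinearMap SM)
    (hN : IsYDL α₂.toLinearMap β₂.toLinearMap γ₂.toLinearMap δ₂.toLinearMap SN)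
    (hP : IsYDL α₃.toLinearMap β₃.toLinearMap γ₃.toLinearMap δ₃.toLinearMap SP) :
    -- `c_{M⊗N,P}`, computed from the parameters
    -- `(α₂α₁, α₂β₁α₂⁻¹β₂, γ₁γ₂, δ₂γ₂⁻¹δ₁γ₂)` of `M ⊗ N`
    braid
        (β₂.symm.toLinearMap ∘ₗ α₂.toLinearMap ∘ₗ β₁.symm.toLinearMap ∘ₗ
          α₂.symm.toLinearMap)
        (γ₂.symm.toLinearMap ∘ₗ δ₁.symm.toLinearMap ∘ₗ γ₂.toLinearMap ∘ₗ
          δ₂.symm.toLinearMap)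
        (tensorYDL (α₂.toLinearMap)
          (α₂.toLinearMap ∘ₗ β₁.toLinearMap ∘ₗ α₂.symm.toLinearMap)
          (γ₂.toLinearMap)
          (γ₂.symm.toLinearMap ∘ₗ δ₁.toLinearMap ∘ₗ γ₂.toLinearMap) SM SN) SP =
      (TensorProduct.assoc k P M N).toLinearMap ∘ₗ
        TensorProduct.map
          -- `c_{M,ᴺP}`, with `ᴺP` the twist of `P` by the parameters of `N`
          (braid β₁.symm.toLinearMap δ₁.symm.toLinearMap SM
            (twistYDL (β₂.symm.toLinearMap ∘ₗ α₂.toLinearMap)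
              (α₂.symm.toLinearMap ∘ₗ α₃.toLinearMap ∘ₗ β₂.toLinearMap ∘ₗ
                α₃.symm.toLinearMap)
              (γ₃.symm.toLinearMap ∘ₗ δ₂.toLinearMap ∘ₗ γ₃.toLinearMap ∘ₗ
                γ₂.symm.toLinearMap)
              (γ₂.toLinearMap ∘ₗ δ₂.symm.toLinearMap) SP))
          LinearMap.id ∘ₗ
        (TensorProduct.assoc k M P N).symm.toLinearMap ∘ₗ
        TensorProduct.map LinearMap.id
          (braid β₂.symm.toLinearMap δ₂.symm.toLinearMap SN SP) ∘ₗ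
        (TensorProduct.assoc k M N P).toLinearMap :=
  braid_hexagon_general β₁ α₂ β₂ α₃ β₃ δ₁ γ₂ δ₂ γ₃ δ₃ SM SN SP hP
end

section
/- Let H₁, H₂ be Hopf algebras with bijective antipodes and let M ∈ LR(α₁,β₁,γ₁,δ₁), N ∈ LR(α₂,β₂,γ₂,δ₂), P ∈ LR(α₃,β₃,γ₃,δ₃) be Yetter-Drinfeld-Long bimodules. Then the braiding c_{M,N}(m⊗n) = β₁⁻¹(m₍₋₁₎) ▷ n₍₀₎ ⊗ m₍₀₎ ◁ δ₁⁻¹(n₍₁₎) is invariant under twisting by P: c_{ᴾM, ᴾN} = c_{M,N} as maps on the underlying vector space M ⊗ N. -/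
/-! Twisting by `P` only precomposes the actions and postcomposes the coactions of `M` and `N`
with automorphisms of `H₁` and `H₂`. In the braiding, the coaction of `M` feeds the action
on `N` and the coaction of `N` feeds the action on `M`, so these automorphisms wrap the maps
`β₁⁻¹` and `δ₁⁻¹`; the conjugated parameters of `ᴾM` are exactly the ones that undo them. -/

open TensorProduct

variable {k H₁ H₂ : Type*} [Field k] [Ring H₁] [Ring H₂]
  [HopfAlgebra k H₁] [HopfAlgebra k H₂]

theorem braid_twistYDL_s10 {M N : Type*} [AddCommGroup M] [Module k M] [AddCommGroup N] [Module k N]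
    (SM : YDLStruct k H₁ H₂ M) (SN : YDLStruct k H₁ H₂ N)
    (uM vM uN vN bInv : H₁ →ₗ[k] H₁) (wM xM wN xN dInv : H₂ →ₗ[k] H₂) :
    braid bInv dInv (twistYDL uM vM wM xM SM) (twistYDL uN vN wN xN SN) =
      braid (uN ∘ₗ bInv ∘ₗ vM) (wM ∘ₗ dInv ∘ₗ xN) SM SN := by
  simp only [braid, twistYDL, TensorProduct.map_comp, ← LinearMap.comp_assoc]
  rw [LinearMap.comp_assoc _ (TensorProduct.tensorTensorTensorComm k H₁ M N H₂).toLinearMap,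
    TensorProduct.tensorTensorTensorComm_comp_map]
  simp only [← LinearMap.comp_assoc]
  congr 2
  simp only [LinearMap.comp_assoc, ← TensorProduct.map_comp, LinearMap.id_comp]

theorem braid_twist_invariant_general {k H₁ H₂ M N : Type*} [Field k] [Ring H₁] [Ring H₂]
    [HopfAlgebra k H₁] [HopfAlgebra k H₂]
    [AddCommGroup M] [Module k M] [AddCommGroup N] [Module k N]
    (α₁ β₁ α₂ α₃ β₃ : H₁ ≃ₐc[k] H₁) (γ₁ δ₁ γ₂ γ₃ δ₃ : H₂ ≃ₐc[k] H₂)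
    (SM : YDLStruct k H₁ H₂ M) (SN : YDLStruct k H₁ H₂ N) :
    -- `c_{ᴾM,ᴾN}`, computed from the conjugated parameters of `ᴾM`
    braid
        (α₃.symm.toLinearMap ∘ₗ β₃.toLinearMap ∘ₗ β₁.symm.toLinearMap ∘ₗ
          α₁.toLinearMap ∘ₗ β₃.symm.toLinearMap ∘ₗ α₁.symm.toLinearMap ∘ₗ
          α₃.toLinearMap)
        (γ₃.toLinearMap ∘ₗ γ₁.symm.toLinearMap ∘ₗ δ₃.symm.toLinearMap ∘ₗ
          γ₁.toLinearMap ∘ₗ δ₁.symm.toLinearMap ∘ₗ δ₃.toLinearMap ∘ₗ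
          γ₃.symm.toLinearMap)
        -- `ᴾM` : the twist of `M` by the parameters of `P`
        (twistYDL (β₃.symm.toLinearMap ∘ₗ α₃.toLinearMap)
          (α₃.symm.toLinearMap ∘ₗ α₁.toLinearMap ∘ₗ β₃.toLinearMap ∘ₗ
            α₁.symm.toLinearMap)
          (γ₁.symm.toLinearMap ∘ₗ δ₃.toLinearMap ∘ₗ γ₁.toLinearMap ∘ₗ
            γ₃.symm.toLinearMap)
          (γ₃.toLinearMap ∘ₗ δ₃.symm.toLinearMap) SM)
        -- `ᴾN` : the twist of `N` by the parameters of `P`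
        (twistYDL (β₃.symm.toLinearMap ∘ₗ α₃.toLinearMap)
          (α₃.symm.toLinearMap ∘ₗ α₂.toLinearMap ∘ₗ β₃.toLinearMap ∘ₗ
            α₂.symm.toLinearMap)
          (γ₂.symm.toLinearMap ∘ₗ δ₃.toLinearMap ∘ₗ γ₂.toLinearMap ∘ₗ
            γ₃.symm.toLinearMap)
          (γ₃.toLinearMap ∘ₗ δ₃.symm.toLinearMap) SN) =
      braid β₁.symm.toLinearMap δ₁.symm.toLinearMap SM SN := by
  rw [braid_twistYDL_s10]
  congr 1 <;> ext h <;> simp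

/-- the braiding is invariant under twisting by `P`:
`c_{ᴾM, ᴾN} = c_{M,N}` as maps on the underlying vector space `M ⊗ N`. -/
theorem braid_twist_invariant {k H₁ H₂ M N P : Type*} [Field k] [Ring H₁] [Ring H₂]
    [HopfAlgebra k H₁] [HopfAlgebra k H₂]
    [AddCommGroup M] [Module k M] [AddCommGroup N] [Module k N]
    [AddCommGroup P] [Module k P]
    (α₁ β₁ α₂ β₂ α₃ β₃ : H₁ ≃ₐc[k] H₁) (γ₁ δ₁ γ₂ δ₂ γ₃ δ₃ : H₂ ≃ₐc[k] H₂)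
    (SM : YDLStruct k H₁ H₂ M) (SN : YDLStruct k H₁ H₂ N) (SP : YDLStruct k H₁ H₂ P)
    (hM : IsYDL α₁.toLinearMap β₁.toLinearMap γ₁.toLinearMap δ₁.toLinearMap SM)
    (hN : IsYDL α₂.toLinearMap β₂.toLinearMap γ₂.toLinearMap δ₂.toLinearMap SN)
    (hP : IsYDL α₃.toLinearMap β₃.toLinearMap γ₃.toLinearMap δ₃.toLinearMap SP) :
    -- `c_{ᴾM,ᴾN}`, computed from the conjugated parameters of `ᴾM`
    braid
        (α₃.symm.toLinearMap ∘ₗ β₃.toLinearMap ∘ₗ β₁.symm.toLinearMap ∘ₗ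
          α₁.toLinearMap ∘ₗ β₃.symm.toLinearMap ∘ₗ α₁.symm.toLinearMap ∘ₗ
          α₃.toLinearMap)
        (γ₃.toLinearMap ∘ₗ γ₁.symm.toLinearMap ∘ₗ δ₃.symm.toLinearMap ∘ₗ
          γ₁.toLinearMap ∘ₗ δ₁.symm.toLinearMap ∘ₗ δ₃.toLinearMap ∘ₗ
          γ₃.symm.toLinearMap)
        -- `ᴾM` : the twist of `M` by the parameters of `P`
        (twistYDL (β₃.symm.toLinearMap ∘ₗ α₃.toLinearMap)
          (α₃.symm.toLinearMap ∘ₗ α₁.toLinearMap ∘ₗ β₃.toLinearMap ∘ₗ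
            α₁.symm.toLinearMap)
          (γ₁.symm.toLinearMap ∘ₗ δ₃.toLinearMap ∘ₗ γ₁.toLinearMap ∘ₗ
            γ₃.symm.toLinearMap)
          (γ₃.toLinearMap ∘ₗ δ₃.symm.toLinearMap) SM)
        -- `ᴾN` : the twist of `N` by the parameters of `P`
        (twistYDL (β₃.symm.toLinearMap ∘ₗ α₃.toLinearMap)
          (α₃.symm.toLinearMap ∘ₗ α₂.toLinearMap ∘ₗ β₃.toLinearMap ∘ₗ
            α₂.symm.toLinearMap)
          (γ₂.symm.toLinearMap ∘ₗ δ₃.toLinearMap ∘ₗ γ₂.toLinearMap ∘ₗ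
            γ₃.symm.toLinearMap)
          (γ₃.toLinearMap ∘ₗ δ₃.symm.toLinearMap) SN) =
      braid β₁.symm.toLinearMap δ₁.symm.toLinearMap SM SN :=
  braid_twist_invariant_general α₁ β₁ α₂ α₃ β₃ γ₁ δ₁ γ₂ γ₃ δ₃ SM SN
end

section
/- Let H₁, H₂ be Hopf algebras and M a finite-dimensional (α,β,γ,δ)-Yetter-Drinfeld-Long bimodule, with dual M* as above. Then the evaluation map ev : M* ⊗ M → k, f ⊗ m ↦ f(m), and the coevaluation coev : k → M ⊗ M*, 1 ↦ Σᵢ mᵢ ⊗ mⁱ (dual bases), satisfy the rigidity (zig-zag) identities (id_M ⊗ ev) ∘ (coev ⊗ id_M) = id_M and (ev ⊗ id_{M*}) ∘ (id_{M*} ⊗ coev) = id_{M*}, and both ev and coev are H₁-H₂-bilinear: ev(h' ▷ (f⊗m) ◁ h'') = ε(h')ε(h'')f(m) and h' ▷ coev(1) ◁ h'' = ε(h')ε(h'') coev(1). -/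
open TensorProduct

variable {k H₁ H₂ : Type*} [Field k] [Ring H₁] [Ring H₂]
  [HopfAlgebra k H₁] [HopfAlgebra k H₂]

/-- The dual structure maps on `M* = Hom(M, k)` for a finite-dimensional
Yetter-Drinfeld-Long bimodule `M`:
`(h'▷f)(m) = f(S₁(h')▷m)`, `f₍₋₁₎ ⊗ f₍₀₎(m) = α⁻¹β⁻¹S₁⁻¹(m₍₋₁₎) ⊗ f(m₍₀₎)`,
`(f◁h'')(m) = f(m◁δ⁻¹γ⁻¹S₂⁻¹(h''))`, `f₍₀₎(m) ⊗ f₍₁₎ = f(m₍₀₎) ⊗ S₂(m₍₁₎)`. -/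
noncomputable def dualYDL {k H₁ H₂ M : Type*} [Field k] [Ring H₁] [Ring H₂]
    [HopfAlgebra k H₁] [HopfAlgebra k H₂]
    [AddCommGroup M] [Module k M] [FiniteDimensional k M]
    (α β : H₁ ≃ₐc[k] H₁) (γ δ : H₂ ≃ₐc[k] H₂)
    (S₁inv : H₁ →ₗ[k] H₁) (S₂inv : H₂ →ₗ[k] H₂)
    (S : YDLStruct k H₁ H₂ M) :
    YDLStruct k H₁ H₂ (Module.Dual k M) where
  actL := TensorProduct.lift
    (Module.Dual.transpose ∘ₗ TensorProduct.curry S.actL ∘ₗ HopfAlgebra.antipode k)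
  actR := TensorProduct.lift
    ((Module.Dual.transpose ∘ₗ (TensorProduct.curry S.actR).flip ∘ₗ
      (δ.symm.toLinearMap ∘ₗ γ.symm.toLinearMap ∘ₗ S₂inv)).flip)
  coL := (TensorProduct.comm k (Module.Dual k M) H₁).toLinearMap ∘ₗ
    (dualTensorHomEquiv k M H₁).symm.toLinearMap ∘ₗ
    LinearMap.lcomp k H₁ S.coL ∘ₗ
    LinearMap.llcomp k (H₁ ⊗[k] M) (H₁ ⊗[k] k) H₁ (TensorProduct.rid k H₁).toLinearMap ∘ₗ
    TensorProduct.mapBilinear (σ₁₂ := RingHom.id k) (M := H₁) (N := M) (M₂ := H₁) (N₂ := k)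
      (α.symm.toLinearMap ∘ₗ β.symm.toLinearMap ∘ₗ S₁inv)
  coR := (dualTensorHomEquiv k M H₂).symm.toLinearMap ∘ₗ
    LinearMap.lcomp k H₂ S.coR ∘ₗ
    LinearMap.llcomp k (M ⊗[k] H₂) (k ⊗[k] H₂) H₂ (TensorProduct.lid k H₂).toLinearMap ∘ₗ
    (TensorProduct.mapBilinear (σ₁₂ := RingHom.id k) (M := M) (N := H₂) (M₂ := k) (N₂ := H₂)).flip
      (HopfAlgebra.antipode k)


namespace DualRigidityAux

open TensorProduct Coalgebra HopfAlgebra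

variable {k H : Type*} [Field k] [Ring H] [HopfAlgebra k H]


variable {k H : Type*} [Field k] [Ring H] [HopfAlgebra k H]

lemma sum_counit_smul_left {a : H} {ι : Type*} (r : Repr k a ι) :
    ∑ i ∈ r.index, counit (R := k) (r.left i) • r.right i = a := by
  have h := congrArg (TensorProduct.lid k H) (sum_counit_tmul_eq r)
  simp only [map_sum, lid_tmul, one_smul] at h
  exact h

lemma sum_counit_smul_right {a : H} {ι : Type*} (r : Repr k a ι) :
    ∑ i ∈ r.index, counit (R := k) (r.right i) • r.left i = a := by
  have h := congrArg (TensorProduct.rid k H) (sum_tmul_counit_eq r)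
  simp only [map_sum, rid_tmul, one_smul] at h
  exact h

lemma antipode_one' : antipode (R := k) (1 : H) = 1 := by
  have h := mul_antipode_rTensor_comul_apply (R := k) (A := H) 1
  simpa [Algebra.TensorProduct.one_def] using h

lemma antipode_contract {a : H} {ι : Type*} {κ : ι → Type*} (r : Repr k a ι)
    (r2 : ∀ i : ι, Repr k (r.right i) (κ i)) :
    ∑ i ∈ r.index, ∑ j ∈ (r2 i).index,
      (antipode (R := k) (r.left i) * (r2 i).left j) ⊗ₜ[k] (r2 i).right j
      = (1 : H) ⊗ₜ[k] a := by
  classical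
  have key := Coalgebra.sum_tmul_tmul_eq r (fun i => ℛ k (r.left i)) r2
  set G : H ⊗[k] (H ⊗[k] H) →ₗ[k] H ⊗[k] H :=
    (TensorProduct.map (LinearMap.mul' k H ∘ₗ
        TensorProduct.map (antipode (R := k)) LinearMap.id) LinearMap.id) ∘ₗ
      (TensorProduct.assoc k H H H).symm.toLinearMap with hG
  have h2 := congrArg G key
  simp only [map_sum, hG, LinearMap.comp_apply, LinearEquiv.coe_coe, assoc_symm_tmul,
    map_tmul, LinearMap.mul'_apply, LinearMap.id_coe, id_eq] at h2
  rw [← h2]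
  have : ∀ i ∈ r.index,
      ∑ j ∈ (ℛ k (r.left i)).index,
        (antipode (R := k) ((ℛ k (r.left i)).left j) * (ℛ k (r.left i)).right j)
          ⊗ₜ[k] r.right i = (1 : H) ⊗ₜ[k] (counit (R := k) (r.left i) • r.right i) := by
    intro i _
    rw [← TensorProduct.sum_tmul, sum_antipode_mul_eq_smul (ℛ k (r.left i))]
    rw [TensorProduct.smul_tmul]
  rw [Finset.sum_congr rfl this, ← TensorProduct.tmul_sum, sum_counit_smul_left r]

noncomputable def Bmap (c u v : H) : H ⊗[k] H →ₗ[k] H :=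
  LinearMap.mulLeft k c ∘ₗ LinearMap.mul' k H ∘ₗ
    TensorProduct.map (LinearMap.mulRight k u) (antipode (R := k) ∘ₗ LinearMap.mulRight k v)

lemma Bmap_tmul (c u v p q : H) :
    Bmap c u v (p ⊗ₜ[k] q) = c * ((p * u) * antipode (R := k) (q * v)) := by
  simp [Bmap]

lemma sum_mul_antipode_mul_eq {a b : H} {ι κ : Type*} (r : Repr k a ι) (s : Repr k b κ) :
    ∑ i ∈ r.index, ∑ j ∈ s.index,
      (r.left i * s.left j) * antipode (R := k) (r.right i * s.right j)
      = (counit (R := k) a * counit (R := k) b) • (1 : H) := by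
  classical
  have h := mul_antipode_lTensor_comul_apply (R := k) (A := H) (a * b)
  rw [Bialgebra.comul_mul, ← r.eq, ← s.eq, Finset.sum_mul_sum] at h
  simp only [Algebra.TensorProduct.tmul_mul_tmul] at h
  simp only [map_sum, LinearMap.lTensor_tmul, LinearMap.mul'_apply] at h
  rw [h, Bialgebra.counit_mul, Algebra.smul_def, map_mul, mul_one]

lemma antipode_mul' (a b : H) :
    antipode (R := k) (a * b) = antipode (R := k) b * antipode (R := k) a := by
  classical
  let ra := ℛ k a
  let rb := ℛ k b
  let ra2 : ∀ i : ra.ι, Repr k (ra.right i) (H × H) := fun i => ℛ k (ra.right i)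
  let rb2 : ∀ j : rb.ι, Repr k (rb.right j) (H × H) := fun j => ℛ k (rb.right j)
  let B : ∀ (j : rb.ι) (l : (rb2 j).ι), H ⊗[k] H →ₗ[k] H :=
    fun j l => Bmap (antipode (R := k) (rb.left j)) ((rb2 j).left l) ((rb2 j).right l)
  have hMID : ∀ (j : rb.ι) (l : (rb2 j).ι),
      ∑ i ∈ ra.index, ∑ kk ∈ (ra2 i).index,
        B j l ((antipode (R := k) (ra.left i) * (ra2 i).left kk) ⊗ₜ[k] (ra2 i).right kk)
      = B j l ((1 : H) ⊗ₜ[k] a) := by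
    intro j l
    have h := congrArg (B j l) (antipode_contract ra ra2)
    simpa only [map_sum] using h
  have inner : ∀ (i : ra.ι) (j : rb.ι),
      ∑ l ∈ (rb2 j).index, ∑ kk ∈ (ra2 i).index,
        ((ra2 i).left kk * (rb2 j).left l) *
          antipode (R := k) ((ra2 i).right kk * (rb2 j).right l)
      = (counit (R := k) (ra.right i) * counit (R := k) (rb.right j)) • (1 : H) := by
    intro i j
    rw [Finset.sum_comm]
    exact sum_mul_antipode_mul_eq (ra2 i) (rb2 j)
  have ha' : ∑ i ∈ ra.index,
      counit (R := k) (ra.right i) • antipode (R := k) (ra.left i)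
      = antipode (R := k) a := by
    simp_rw [← map_smul]
    rw [← map_sum, sum_counit_smul_right ra]
  have hb' : ∑ j ∈ rb.index,
      counit (R := k) (rb.right j) • antipode (R := k) (rb.left j)
      = antipode (R := k) b := by
    simp_rw [← map_smul]
    rw [← map_sum, sum_counit_smul_right rb]
  have claim1 : ∑ j ∈ rb.index, ∑ l ∈ (rb2 j).index, ∑ i ∈ ra.index,
      ∑ kk ∈ (ra2 i).index,
        B j l ((antipode (R := k) (ra.left i) * (ra2 i).left kk) ⊗ₜ[k] (ra2 i).right kk)
      = antipode (R := k) b * antipode (R := k) a := by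
    have step1 : ∀ j ∈ rb.index, ∑ l ∈ (rb2 j).index, ∑ i ∈ ra.index,
        ∑ kk ∈ (ra2 i).index,
          B j l ((antipode (R := k) (ra.left i) * (ra2 i).left kk) ⊗ₜ[k] (ra2 i).right kk)
        = counit (R := k) (rb.right j) •
            (antipode (R := k) (rb.left j) * antipode (R := k) a) := by
      intro j _
      rw [Finset.sum_comm]
      have step2 : ∀ i ∈ ra.index, ∑ l ∈ (rb2 j).index, ∑ kk ∈ (ra2 i).index,
          B j l ((antipode (R := k) (ra.left i) * (ra2 i).left kk) ⊗ₜ[k] (ra2 i).right kk)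
          = antipode (R := k) (rb.left j) * (antipode (R := k) (ra.left i) *
              ((counit (R := k) (ra.right i) * counit (R := k) (rb.right j)) • (1 : H))) := by
        intro i _
        rw [← inner i j]
        simp only [Finset.mul_sum]
        refine Finset.sum_congr rfl fun l _ => Finset.sum_congr rfl fun kk _ => ?_
        show B j l _ = _
        rw [Bmap_tmul]
        simp only [mul_assoc]
      rw [Finset.sum_congr rfl step2]
      simp only [mul_smul_comm, mul_one]
      have step3 : ∀ i ∈ ra.index,
          (counit (R := k) (ra.right i) * counit (R := k) (rb.right j)) •
            (antipode (R := k) (rb.left j) * antipode (R := k) (ra.left i))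
          = counit (R := k) (rb.right j) • (counit (R := k) (ra.right i) •
              (antipode (R := k) (rb.left j) * antipode (R := k) (ra.left i))) := by
        intro i _
        rw [mul_comm, mul_smul]
      rw [Finset.sum_congr rfl step3, ← Finset.smul_sum]
      congr 1
      simp_rw [← mul_smul_comm]
      rw [← Finset.mul_sum, ha']
    rw [Finset.sum_congr rfl step1]
    simp_rw [← smul_mul_assoc]
    rw [← Finset.sum_mul, hb']
  have claim2 : ∑ j ∈ rb.index, ∑ l ∈ (rb2 j).index, B j l ((1 : H) ⊗ₜ[k] a)
      = antipode (R := k) (a * b) := by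
    have hC := antipode_contract rb rb2
    have h := congrArg (LinearMap.mul' k H ∘ₗ TensorProduct.map LinearMap.id
      (antipode (R := k) ∘ₗ LinearMap.mulLeft k a)) hC
    simp only [map_sum, LinearMap.comp_apply, map_tmul, LinearMap.id_coe, id_eq,
      LinearMap.mul'_apply, LinearMap.mulLeft_apply] at h
    rw [one_mul] at h
    rw [← h]
    refine Finset.sum_congr rfl fun j _ => Finset.sum_congr rfl fun l _ => ?_
    show B j l _ = _
    rw [Bmap_tmul]
    simp only [one_mul, mul_assoc]
  rw [← claim2, ← claim1]
  exact Finset.sum_congr rfl fun j _ => Finset.sum_congr rfl fun l _ => (hMID j l).symm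

section SInv
variable (Sinv : H →ₗ[k] H)

lemma sum_right_mul_sinv (hS : ∀ x : H, Sinv (antipode (R := k) x) = x)
    (hS' : ∀ x : H, antipode (R := k) (Sinv x) = x) {a : H} {ι : Type*} (r : Repr k a ι) :
    ∑ i ∈ r.index, r.right i * Sinv (r.left i) = counit (R := k) a • 1 := by
  have inj : Function.Injective (antipode (R := k) (A := H)) :=
    Function.LeftInverse.injective hS
  apply inj
  rw [map_sum, map_smul, antipode_one']
  have h : ∀ i ∈ r.index, antipode (R := k) (r.right i * Sinv (r.left i))
      = r.left i * antipode (R := k) (r.right i) := by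
    intro i _
    rw [antipode_mul', hS']
  rw [Finset.sum_congr rfl h, sum_mul_antipode_eq_smul r]

lemma sum_sinv_mul_left (hS : ∀ x : H, Sinv (antipode (R := k) x) = x)
    (hS' : ∀ x : H, antipode (R := k) (Sinv x) = x) {a : H} {ι : Type*} (r : Repr k a ι) :
    ∑ i ∈ r.index, Sinv (r.right i) * r.left i = counit (R := k) a • 1 := by
  have inj : Function.Injective (antipode (R := k) (A := H)) :=
    Function.LeftInverse.injective hS
  apply inj
  rw [map_sum, map_smul, antipode_one']
  have h : ∀ i ∈ r.index, antipode (R := k) (Sinv (r.right i) * r.left i)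
      = antipode (R := k) (r.left i) * r.right i := by
    intro i _
    rw [antipode_mul', hS']
  rw [Finset.sum_congr rfl h, sum_antipode_mul_eq_smul r]

end SInv

lemma toLin_apply (phi : H ≃ₐc[k] H) (x : H) : phi.toLinearMap x = phi x := rfl

lemma bsymm_cancel (phi : H ≃ₐc[k] H) (x : H) : phi.symm (phi x) = x :=
  CoalgEquiv.symm_apply_apply phi.toCoalgEquiv x

lemma bcancel_symm (phi : H ≃ₐc[k] H) (x : H) : phi (phi.symm x) = x :=
  CoalgEquiv.apply_symm_apply phi.toCoalgEquiv x

lemma counit_equiv (phi : H ≃ₐc[k] H) (a : H) :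
    counit (R := k) (phi a) = counit (R := k) a :=
  LinearMap.congr_fun (CoalgHomClass.counit_comp (F := H ≃ₐc[k] H) phi) a

/-- push a representation through a bialgebra equivalence -/
noncomputable def reprMap (φ : H ≃ₐc[k] H) {a : H} {ι : Type*} (r : Repr k a ι) : Repr k (φ a) ι where
  index := r.index
  left i := φ (r.left i)
  right i := φ (r.right i)
  eq := by
    have h2 := LinearMap.congr_fun (CoalgHomClass.map_comp_comul (F := H ≃ₐc[k] H) φ) a
    rw [LinearMap.comp_apply, LinearMap.comp_apply, ← r.eq, map_sum] at h2
    simpa using h2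

end DualRigidityAux

section ApplyLemmas

open TensorProduct Coalgebra HopfAlgebra

variable {M N : Type*} [AddCommGroup M] [Module k M] [AddCommGroup N] [Module k N]

lemma tensorYDL_actL_apply (u v : H₁ →ₗ[k] H₁) (w x : H₂ →ₗ[k] H₂)
    (SM : YDLStruct k H₁ H₂ M) (SN : YDLStruct k H₁ H₂ N)
    (h : H₁) {ι : Type*} (r : Coalgebra.Repr k h ι) (m : M) (n : N) :
    (tensorYDL u v w x SM SN).actL (h ⊗ₜ[k] (m ⊗ₜ[k] n)) =
      ∑ i ∈ r.index, SM.actL (r.left i ⊗ₜ[k] m) ⊗ₜ[k] SN.actL (r.right i ⊗ₜ[k] n) := by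
  simp only [tensorYDL, LinearMap.comp_apply, map_tmul, LinearMap.id_coe, id_eq]
  rw [← r.eq, TensorProduct.sum_tmul, map_sum, map_sum]
  simp [tensorTensorTensorComm_tmul]

lemma tensorYDL_actR_apply (u v : H₁ →ₗ[k] H₁) (w x : H₂ →ₗ[k] H₂)
    (SM : YDLStruct k H₁ H₂ M) (SN : YDLStruct k H₁ H₂ N)
    (h : H₂) {ι : Type*} (r : Coalgebra.Repr k h ι) (m : M) (n : N) :
    (tensorYDL u v w x SM SN).actR ((m ⊗ₜ[k] n) ⊗ₜ[k] h) =
      ∑ i ∈ r.index, SM.actR (m ⊗ₜ[k] w (r.left i)) ⊗ₜ[k] SN.actR (n ⊗ₜ[k] x (r.right i)) := by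
  simp only [tensorYDL, LinearMap.comp_apply, map_tmul, LinearMap.id_coe, id_eq]
  rw [← r.eq, map_sum, TensorProduct.tmul_sum, map_sum, map_sum]
  simp [tensorTensorTensorComm_tmul]

lemma dualYDL_actL_apply [FiniteDimensional k M]
    (α β : H₁ ≃ₐc[k] H₁) (γ δ : H₂ ≃ₐc[k] H₂)
    (S₁inv : H₁ →ₗ[k] H₁) (S₂inv : H₂ →ₗ[k] H₂) (S : YDLStruct k H₁ H₂ M)
    (h : H₁) (f : Module.Dual k M) (m : M) :
    ((dualYDL α β γ δ S₁inv S₂inv S).actL (h ⊗ₜ[k] f)) m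
      = f (S.actL (HopfAlgebra.antipode (R := k) h ⊗ₜ[k] m)) := by
  simp [dualYDL, Module.Dual.transpose_apply, TensorProduct.curry_apply]

lemma dualYDL_actR_apply [FiniteDimensional k M]
    (α β : H₁ ≃ₐc[k] H₁) (γ δ : H₂ ≃ₐc[k] H₂)
    (S₁inv : H₁ →ₗ[k] H₁) (S₂inv : H₂ →ₗ[k] H₂) (S : YDLStruct k H₁ H₂ M)
    (h : H₂) (f : Module.Dual k M) (m : M) :
    ((dualYDL α β γ δ S₁inv S₂inv S).actR (f ⊗ₜ[k] h)) m
      = f (S.actR (m ⊗ₜ[k] δ.symm (γ.symm (S₂inv h)))) := by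
  simp [dualYDL, Module.Dual.transpose_apply, TensorProduct.curry_apply]
  rfl

end ApplyLemmas

set_option maxHeartbeats 1600000 in
/-- for a finite-dimensional `(α,β,γ,δ)`-Yetter-Drinfeld-Long bimodule `M`
with dual `M*` as in `dualYDL`, the evaluation `ev : M* ⊗ M → k` and coevaluation
`coev : k → M ⊗ M*` satisfy the rigidity (zig-zag) identities and are
`H₁`-`H₂`-bilinear: `ev(h' ▷ (f⊗m) ◁ h'') = ε(h')ε(h'') f(m)` and
`h' ▷ coev(1) ◁ h'' = ε(h')ε(h'') coev(1)`. -/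
theorem dual_rigidity {k H₁ H₂ M : Type*} [Field k] [Ring H₁] [Ring H₂]
    [HopfAlgebra k H₁] [HopfAlgebra k H₂]
    [AddCommGroup M] [Module k M] [FiniteDimensional k M]
    (S₁inv : H₁ →ₗ[k] H₁) (S₂inv : H₂ →ₗ[k] H₂)
    (hS₁ : ∀ h : H₁, S₁inv (HopfAlgebra.antipode (R := k) h) = h)
    (hS₁' : ∀ h : H₁, HopfAlgebra.antipode (R := k) (S₁inv h) = h)
    (hS₂ : ∀ h : H₂, S₂inv (HopfAlgebra.antipode (R := k) h) = h)
    (hS₂' : ∀ h : H₂, HopfAlgebra.antipode (R := k) (S₂inv h) = h)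
    (α β : H₁ ≃ₐc[k] H₁) (γ δ : H₂ ≃ₐc[k] H₂)
    (S : YDLStruct k H₁ H₂ M)
    (hM : IsYDL α.toLinearMap β.toLinearMap γ.toLinearMap δ.toLinearMap S) :
    -- zig-zag identities
    (∀ m : M,
      TensorProduct.map LinearMap.id (contractLeft k M)
        (TensorProduct.assoc k M (Module.Dual k M) M
          (TensorProduct.map (coevaluation k M) LinearMap.id
            ((TensorProduct.lid k M).symm m))) =
      (TensorProduct.rid k M).symm m) ∧
    (∀ f : Module.Dual k M,
      TensorProduct.map (contractLeft k M) LinearMap.id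
        ((TensorProduct.assoc k (Module.Dual k M) M (Module.Dual k M)).symm
          (TensorProduct.map LinearMap.id (coevaluation k M)
            ((TensorProduct.rid k (Module.Dual k M)).symm f))) =
      (TensorProduct.lid k (Module.Dual k M)).symm f) ∧
    -- `ev` is `H₁`-`H₂`-bilinear for the tensor product structure on `M* ⊗ M`
    (∀ (h' : H₁) (h'' : H₂) (f : Module.Dual k M) (m : M),
      contractLeft k M
        ((tensorYDL (α.toLinearMap)
            (α.toLinearMap ∘ₗ
              (α.symm.toLinearMap ∘ₗ β.symm.toLinearMap ∘ₗ α.toLinearMap) ∘ₗ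
              α.symm.toLinearMap)
            (γ.toLinearMap)
            (γ.symm.toLinearMap ∘ₗ
              (γ.toLinearMap ∘ₗ δ.symm.toLinearMap ∘ₗ γ.symm.toLinearMap) ∘ₗ
              γ.toLinearMap)
            (dualYDL α β γ δ S₁inv S₂inv S) S).actR
          (((tensorYDL (α.toLinearMap)
              (α.toLinearMap ∘ₗ
                (α.symm.toLinearMap ∘ₗ β.symm.toLinearMap ∘ₗ α.toLinearMap) ∘ₗ
                α.symm.toLinearMap)
              (γ.toLinearMap)
              (γ.symm.toLinearMap ∘ₗ
                (γ.toLinearMap ∘ₗ δ.symm.toLinearMap ∘ₗ γ.symm.toLinearMap) ∘ₗ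
                γ.toLinearMap)
              (dualYDL α β γ δ S₁inv S₂inv S) S).actL
            (h' ⊗ₜ[k] (f ⊗ₜ[k] m))) ⊗ₜ[k] h'')) =
      Coalgebra.counit (R := k) h' * Coalgebra.counit (R := k) h'' * f m) ∧
    -- `coev` is `H₁`-`H₂`-bilinear for the tensor product structure on `M ⊗ M*`
    (∀ (h' : H₁) (h'' : H₂),
      (tensorYDL (α.symm.toLinearMap)
          (α.symm.toLinearMap ∘ₗ β.toLinearMap ∘ₗ α.toLinearMap)
          (γ.symm.toLinearMap)
          (γ.toLinearMap ∘ₗ δ.toLinearMap ∘ₗ γ.symm.toLinearMap)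
          S (dualYDL α β γ δ S₁inv S₂inv S)).actR
        (((tensorYDL (α.symm.toLinearMap)
            (α.symm.toLinearMap ∘ₗ β.toLinearMap ∘ₗ α.toLinearMap)
            (γ.symm.toLinearMap)
            (γ.toLinearMap ∘ₗ δ.toLinearMap ∘ₗ γ.symm.toLinearMap)
            S (dualYDL α β γ δ S₁inv S₂inv S)).actL
          (h' ⊗ₜ[k] coevaluation k M 1)) ⊗ₜ[k] h'') =
      (Coalgebra.counit (R := k) h' * Coalgebra.counit (R := k) h'') •
        coevaluation k M 1) := by
  classical
  obtain ⟨hL1, hLmul, hR1, hRmul, hbi, _, _, _, _, _, _, _, _, _⟩ := hM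
  refine ⟨?_, ?_, ?_, ?_⟩
  · intro m
    have h := LinearMap.congr_fun (contractLeft_assoc_coevaluation' k M)
      ((TensorProduct.lid k M).symm m)
    simp only [LinearMap.comp_apply, LinearEquiv.coe_coe, LinearEquiv.apply_symm_apply] at h
    exact h
  · intro f
    have h := LinearMap.congr_fun (contractLeft_assoc_coevaluation k M)
      ((TensorProduct.rid k (Module.Dual k M)).symm f)
    simp only [LinearMap.comp_apply, LinearEquiv.coe_coe, LinearEquiv.apply_symm_apply] at h
    exact h
  · -- evaluation is bilinear
    intro h' h'' f m
    set r1 := Coalgebra.Repr.arbitrary k h' with hr1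
    set r2 := Coalgebra.Repr.arbitrary k h'' with hr2
    rw [tensorYDL_actL_apply _ _ _ _ _ _ h' r1 f m, TensorProduct.sum_tmul, map_sum, map_sum]
    have hterm : ∀ i ∈ r1.index,
        contractLeft k M ((tensorYDL (α.toLinearMap)
            (α.toLinearMap ∘ₗ
              (α.symm.toLinearMap ∘ₗ β.symm.toLinearMap ∘ₗ α.toLinearMap) ∘ₗ
              α.symm.toLinearMap)
            (γ.toLinearMap)
            (γ.symm.toLinearMap ∘ₗ
              (γ.toLinearMap ∘ₗ δ.symm.toLinearMap ∘ₗ γ.symm.toLinearMap) ∘ₗ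
              γ.toLinearMap)
            (dualYDL α β γ δ S₁inv S₂inv S) S).actR
          (((dualYDL α β γ δ S₁inv S₂inv S).actL (r1.left i ⊗ₜ[k] f) ⊗ₜ[k]
              S.actL (r1.right i ⊗ₜ[k] m)) ⊗ₜ[k] h''))
        = Coalgebra.counit (R := k) h'' •
            f (S.actL ((HopfAlgebra.antipode (R := k) (r1.left i) * r1.right i) ⊗ₜ[k] m)) := by
      intro i _
      rw [tensorYDL_actR_apply _ _ _ _ _ _ h'' r2, map_sum]
      have hj : ∀ j ∈ r2.index,
          contractLeft k M ((dualYDL α β γ δ S₁inv S₂inv S).actR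
              ((dualYDL α β γ δ S₁inv S₂inv S).actL (r1.left i ⊗ₜ[k] f) ⊗ₜ[k]
                γ.toLinearMap (r2.left j)) ⊗ₜ[k]
            S.actR (S.actL (r1.right i ⊗ₜ[k] m) ⊗ₜ[k]
              ((γ.symm.toLinearMap ∘ₗ
                (γ.toLinearMap ∘ₗ δ.symm.toLinearMap ∘ₗ γ.symm.toLinearMap) ∘ₗ
                γ.toLinearMap) (r2.right j))))
          = f (S.actL ((HopfAlgebra.antipode (R := k) (r1.left i) * r1.right i) ⊗ₜ[k]
              S.actR (m ⊗ₜ[k] (δ.symm (r2.right j) *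
                δ.symm (γ.symm (S₂inv (γ (r2.left j)))))))) := by
        intro j _
        have hx : (γ.symm.toLinearMap ∘ₗ
            (γ.toLinearMap ∘ₗ δ.symm.toLinearMap ∘ₗ γ.symm.toLinearMap) ∘ₗ
            γ.toLinearMap) (r2.right j) = δ.symm (r2.right j) := by
          show γ.symm (γ (δ.symm (γ.symm (γ (r2.right j))))) = δ.symm (r2.right j)
          rw [DualRigidityAux.bsymm_cancel, DualRigidityAux.bsymm_cancel]
        rw [hx, contractLeft_apply, dualYDL_actR_apply, dualYDL_actL_apply,
          DualRigidityAux.toLin_apply, hRmul, hbi, ← hLmul]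
      rw [Finset.sum_congr rfl hj]
      have hc : ∑ j ∈ r2.index, (δ.symm (r2.right j) *
          δ.symm (γ.symm (S₂inv (γ (r2.left j)))))
          = Coalgebra.counit (R := k) h'' • (1 : H₂) := by
        have key := DualRigidityAux.sum_right_mul_sinv S₂inv hS₂ hS₂'
          (DualRigidityAux.reprMap γ r2)
        simp only [DualRigidityAux.reprMap] at key
        have e : ∀ j ∈ r2.index, δ.symm (r2.right j) *
            δ.symm (γ.symm (S₂inv (γ (r2.left j))))
            = δ.symm (γ.symm (γ (r2.right j) * S₂inv (γ (r2.left j)))) := by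
          intro j _
          rw [map_mul, map_mul, DualRigidityAux.bsymm_cancel]
        rw [Finset.sum_congr rfl e, ← map_sum, ← map_sum, key, map_smul, map_smul,
          map_one, map_one, DualRigidityAux.counit_equiv]
      rw [← map_sum, ← map_sum, ← TensorProduct.tmul_sum, ← map_sum,
        ← TensorProduct.tmul_sum, hc, TensorProduct.tmul_smul, map_smul, hR1,
        TensorProduct.tmul_smul, map_smul, map_smul]
    rw [Finset.sum_congr rfl hterm, ← Finset.smul_sum, ← map_sum, ← map_sum,
      ← TensorProduct.sum_tmul, HopfAlgebra.sum_antipode_mul_eq_smul r1,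
      ← TensorProduct.smul_tmul', map_smul, hL1, map_smul]
    simp only [smul_eq_mul]
    ring
  · -- coevaluation is bilinear
    intro h' h''
    set r1 := Coalgebra.Repr.arbitrary k h' with hr1
    set r2 := Coalgebra.Repr.arbitrary k h'' with hr2
    set bV := Module.Basis.ofVectorSpace k M with hbV
    simp only [coevaluation_apply_one]
    rw [TensorProduct.tmul_sum, map_sum]
    have e1 : ∀ i ∈ (Finset.univ : Finset (Module.Basis.ofVectorSpaceIndex k M)),
        (tensorYDL (α.symm.toLinearMap)
            (α.symm.toLinearMap ∘ₗ β.toLinearMap ∘ₗ α.toLinearMap)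
            (γ.symm.toLinearMap)
            (γ.toLinearMap ∘ₗ δ.toLinearMap ∘ₗ γ.symm.toLinearMap)
            S (dualYDL α β γ δ S₁inv S₂inv S)).actL
          (h' ⊗ₜ[k] (bV i ⊗ₜ[k] bV.coord i))
        = ∑ j ∈ r1.index, S.actL (r1.left j ⊗ₜ[k] bV i) ⊗ₜ[k]
            (dualYDL α β γ δ S₁inv S₂inv S).actL (r1.right j ⊗ₜ[k] bV.coord i) :=
      fun i _ => tensorYDL_actL_apply _ _ _ _ _ _ h' r1 _ _
    rw [Finset.sum_congr rfl e1, TensorProduct.sum_tmul, map_sum]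
    have e2 : ∀ i ∈ (Finset.univ : Finset (Module.Basis.ofVectorSpaceIndex k M)),
        (tensorYDL (α.symm.toLinearMap)
            (α.symm.toLinearMap ∘ₗ β.toLinearMap ∘ₗ α.toLinearMap)
            (γ.symm.toLinearMap)
            (γ.toLinearMap ∘ₗ δ.toLinearMap ∘ₗ γ.symm.toLinearMap)
            S (dualYDL α β γ δ S₁inv S₂inv S)).actR
          ((∑ j ∈ r1.index, S.actL (r1.left j ⊗ₜ[k] bV i) ⊗ₜ[k]
              (dualYDL α β γ δ S₁inv S₂inv S).actL (r1.right j ⊗ₜ[k] bV.coord i))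
            ⊗ₜ[k] h'')
        = ∑ j ∈ r1.index, ∑ l ∈ r2.index,
            S.actR (S.actL (r1.left j ⊗ₜ[k] bV i) ⊗ₜ[k]
                γ.symm.toLinearMap (r2.left l)) ⊗ₜ[k]
              (dualYDL α β γ δ S₁inv S₂inv S).actR
                ((dualYDL α β γ δ S₁inv S₂inv S).actL (r1.right j ⊗ₜ[k] bV.coord i)
                  ⊗ₜ[k] (γ.toLinearMap ∘ₗ δ.toLinearMap ∘ₗ γ.symm.toLinearMap)
                    (r2.right l)) := by
      intro i _
      rw [TensorProduct.sum_tmul, map_sum]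
      exact Finset.sum_congr rfl fun j _ => tensorYDL_actR_apply _ _ _ _ _ _ h'' r2 _ _
    rw [Finset.sum_congr rfl e2]
    -- now apply injectivity of M ⊗ M* ≃ End(M)
    set Φe := (TensorProduct.comm k M (Module.Dual k M)) ≪≫ₗ dualTensorHomEquiv k M M
      with hΦe
    apply Φe.injective
    have hΦ : ∀ (z : M) (g : Module.Dual k M), Φe (z ⊗ₜ[k] g) = dualTensorHom k M M (g ⊗ₜ[k] z) := by
      intro z g
      simp [hΦe, dualTensorHomEquiv, dualTensorHomEquivOfBasis_apply]
    refine LinearMap.ext fun n => ?_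
    rw [map_sum, LinearMap.coe_sum, Finset.sum_apply]
    -- compute scalar factors
    have hq : ∀ l ∈ r2.index,
        δ.symm (γ.symm (S₂inv ((γ.toLinearMap ∘ₗ δ.toLinearMap ∘ₗ γ.symm.toLinearMap)
            (r2.right l)))) * γ.symm (r2.left l)
        = δ.symm (γ.symm (S₂inv (γ (δ (γ.symm (r2.right l)))) * γ (δ (γ.symm (r2.left l))))) := by
      intro l _
      rw [map_mul, map_mul, DualRigidityAux.bsymm_cancel γ, DualRigidityAux.bsymm_cancel δ]
      rfl
    have hcsum : ∑ l ∈ r2.index,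
        (δ.symm (γ.symm (S₂inv ((γ.toLinearMap ∘ₗ δ.toLinearMap ∘ₗ γ.symm.toLinearMap)
            (r2.right l)))) * γ.symm (r2.left l))
        = Coalgebra.counit (R := k) h'' • (1 : H₂) := by
      rw [Finset.sum_congr rfl hq]
      have key := DualRigidityAux.sum_sinv_mul_left S₂inv hS₂ hS₂'
        (DualRigidityAux.reprMap γ (DualRigidityAux.reprMap δ
          (DualRigidityAux.reprMap γ.symm r2)))
      simp only [DualRigidityAux.reprMap] at key
      rw [← map_sum, ← map_sum, key, map_smul, map_smul, map_one, map_one,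
        DualRigidityAux.counit_equiv, DualRigidityAux.counit_equiv,
        DualRigidityAux.counit_equiv]
    -- evaluate each term of the big sum
    have hterm : ∀ i ∈ (Finset.univ : Finset (Module.Basis.ofVectorSpaceIndex k M)),
        Φe (∑ j ∈ r1.index, ∑ l ∈ r2.index,
            S.actR (S.actL (r1.left j ⊗ₜ[k] bV i) ⊗ₜ[k]
                γ.symm.toLinearMap (r2.left l)) ⊗ₜ[k]
              (dualYDL α β γ δ S₁inv S₂inv S).actR
                ((dualYDL α β γ δ S₁inv S₂inv S).actL (r1.right j ⊗ₜ[k] bV.coord i)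
                  ⊗ₜ[k] (γ.toLinearMap ∘ₗ δ.toLinearMap ∘ₗ γ.symm.toLinearMap)
                    (r2.right l))) n
        = ∑ j ∈ r1.index, ∑ l ∈ r2.index,
            bV.coord i (S.actL (HopfAlgebra.antipode (R := k) (r1.right j) ⊗ₜ[k]
              S.actR (n ⊗ₜ[k] δ.symm (γ.symm (S₂inv
                ((γ.toLinearMap ∘ₗ δ.toLinearMap ∘ₗ γ.symm.toLinearMap) (r2.right l))))))) •
            S.actR (S.actL (r1.left j ⊗ₜ[k] bV i) ⊗ₜ[k] γ.symm (r2.left l)) := by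
      intro i _
      rw [map_sum, LinearMap.coe_sum, Finset.sum_apply]
      refine Finset.sum_congr rfl fun j _ => ?_
      rw [map_sum, LinearMap.coe_sum, Finset.sum_apply]
      refine Finset.sum_congr rfl fun l _ => ?_
      rw [hΦ, dualTensorHom_apply, dualYDL_actR_apply, dualYDL_actL_apply,
        DualRigidityAux.toLin_apply γ.symm]
    rw [Finset.sum_congr rfl hterm, Finset.sum_comm]
    have hmid : ∀ j ∈ r1.index, ∑ i ∈ (Finset.univ : Finset (Module.Basis.ofVectorSpaceIndex k M)),
        ∑ l ∈ r2.index,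
          bV.coord i (S.actL (HopfAlgebra.antipode (R := k) (r1.right j) ⊗ₜ[k]
            S.actR (n ⊗ₜ[k] δ.symm (γ.symm (S₂inv
              ((γ.toLinearMap ∘ₗ δ.toLinearMap ∘ₗ γ.symm.toLinearMap) (r2.right l))))))) •
          S.actR (S.actL (r1.left j ⊗ₜ[k] bV i) ⊗ₜ[k] γ.symm (r2.left l))
        = Coalgebra.counit (R := k) h'' •
            S.actL ((r1.left j * HopfAlgebra.antipode (R := k) (r1.right j)) ⊗ₜ[k] n) := by
      intro j _
      rw [Finset.sum_comm]
      have hl : ∀ l ∈ r2.index,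
          ∑ i ∈ (Finset.univ : Finset (Module.Basis.ofVectorSpaceIndex k M)),
            bV.coord i (S.actL (HopfAlgebra.antipode (R := k) (r1.right j) ⊗ₜ[k]
              S.actR (n ⊗ₜ[k] δ.symm (γ.symm (S₂inv
                ((γ.toLinearMap ∘ₗ δ.toLinearMap ∘ₗ γ.symm.toLinearMap) (r2.right l))))))) •
            S.actR (S.actL (r1.left j ⊗ₜ[k] bV i) ⊗ₜ[k] γ.symm (r2.left l))
          = S.actL ((r1.left j * HopfAlgebra.antipode (R := k) (r1.right j)) ⊗ₜ[k]
              S.actR (n ⊗ₜ[k]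
                (δ.symm (γ.symm (S₂inv ((γ.toLinearMap ∘ₗ δ.toLinearMap ∘ₗ
                  γ.symm.toLinearMap) (r2.right l)))) * γ.symm (r2.left l)))) := by
        intro l _
        have pull : ∀ i ∈ (Finset.univ : Finset (Module.Basis.ofVectorSpaceIndex k M)),
            bV.coord i (S.actL (HopfAlgebra.antipode (R := k) (r1.right j) ⊗ₜ[k]
              S.actR (n ⊗ₜ[k] δ.symm (γ.symm (S₂inv
                ((γ.toLinearMap ∘ₗ δ.toLinearMap ∘ₗ γ.symm.toLinearMap) (r2.right l))))))) •
            S.actR (S.actL (r1.left j ⊗ₜ[k] bV i) ⊗ₜ[k] γ.symm (r2.left l))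
            = S.actR (S.actL (r1.left j ⊗ₜ[k]
                (bV.coord i (S.actL (HopfAlgebra.antipode (R := k) (r1.right j) ⊗ₜ[k]
                  S.actR (n ⊗ₜ[k] δ.symm (γ.symm (S₂inv
                    ((γ.toLinearMap ∘ₗ δ.toLinearMap ∘ₗ γ.symm.toLinearMap)
                      (r2.right l))))))) • bV i)) ⊗ₜ[k] γ.symm (r2.left l)) := by
          intro i _
          rw [TensorProduct.tmul_smul, map_smul, ← TensorProduct.smul_tmul', map_smul]
        rw [Finset.sum_congr rfl pull, ← map_sum, ← TensorProduct.sum_tmul, ← map_sum,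
          ← TensorProduct.tmul_sum]
        have hbasis : ∑ i ∈ (Finset.univ : Finset (Module.Basis.ofVectorSpaceIndex k M)),
            bV.coord i (S.actL (HopfAlgebra.antipode (R := k) (r1.right j) ⊗ₜ[k]
              S.actR (n ⊗ₜ[k] δ.symm (γ.symm (S₂inv
                ((γ.toLinearMap ∘ₗ δ.toLinearMap ∘ₗ γ.symm.toLinearMap)
                  (r2.right l))))))) • bV i
            = S.actL (HopfAlgebra.antipode (R := k) (r1.right j) ⊗ₜ[k]
                S.actR (n ⊗ₜ[k] δ.symm (γ.symm (S₂inv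
                  ((γ.toLinearMap ∘ₗ δ.toLinearMap ∘ₗ γ.symm.toLinearMap)
                    (r2.right l)))))) := by
          simp only [Module.Basis.coord_apply]
          exact bV.sum_repr _
        rw [hbasis, ← hLmul, hbi, hRmul]
      rw [Finset.sum_congr rfl hl, ← map_sum, ← TensorProduct.tmul_sum, ← map_sum,
        ← TensorProduct.tmul_sum, hcsum, TensorProduct.tmul_smul, map_smul, hR1,
        TensorProduct.tmul_smul, map_smul]
    rw [Finset.sum_congr rfl hmid, ← Finset.smul_sum, ← map_sum, ← TensorProduct.sum_tmul,
      HopfAlgebra.sum_mul_antipode_eq_smul r1, ← TensorProduct.smul_tmul', map_smul, hL1]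
    -- right hand side
    rw [map_smul, map_sum, LinearMap.smul_apply, LinearMap.coe_sum, Finset.sum_apply]
    have hrhs : ∀ i ∈ (Finset.univ : Finset (Module.Basis.ofVectorSpaceIndex k M)),
        Φe (bV i ⊗ₜ[k] bV.coord i) n = bV.coord i n • bV i := by
      intro i _
      rw [hΦ, dualTensorHom_apply]
    rw [Finset.sum_congr rfl hrhs]
    have : ∑ i ∈ (Finset.univ : Finset (Module.Basis.ofVectorSpaceIndex k M)),
        bV.coord i n • bV i = n := by
      simp only [Module.Basis.coord_apply]
      exact bV.sum_repr n
    rw [this, smul_smul, mul_comm (Coalgebra.counit (R := k) h'') (Coalgebra.counit (R := k) h')]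
end

section
/- Let H₁, H₂ be Hopf algebras and M ∈ LR(α₁,β₁,γ₁,δ₁), N ∈ LR(α₂,β₂,γ₂,δ₂) Yetter-Drinfeld-Long bimodules. Then the braiding c_{M,N}(m⊗n) = β₁⁻¹(m₍₋₁₎) ▷ n₍₀₎ ⊗ m₍₀₎ ◁ δ₁⁻¹(n₍₁₎), viewed as a map M ⊗ N → ᴹN ⊗ M, is right H₂-linear: c_{M,N}((m⊗n) ◁ h'') = c_{M,N}(m⊗n) ◁ h'' for all h'' ∈ H₂, where the right H₂-actions on both sides come from the tensor product structures on M ⊗ N (parameters (α₁,β₁,γ₁,δ₁)*(α₂,β₂,γ₂,δ₂)) and on ᴹN ⊗ M respectively. -/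
/-!
Write `ξ = γ₂⁻¹δ₁γ₂`. Both sides of the identity are obtained by applying
`p ⊗ m ⊗ n ⊗ t ↦ β₁⁻¹(p) ▷ n ⊗ m ◁ δ₁⁻¹(t)` to `m₍₋₁₎ ⊗ m₍₀₎ ⊗ y` for some `y ∈ N ⊗ H₂`.
On the left, (2.4) for `M` and `δ₁γ₂ = γ₂ξ` give
`y = (n ◁ ξ(h)₍₂₎)₍₀₎ ⊗ γ₂(ξ(h)₍₁₎) (n ◁ ξ(h)₍₂₎)₍₁₎`; on the right, the bimodule
property of `N` gives `y = n₍₀₎ ◁ ξ(h)₍₁₎ ⊗ n₍₁₎ δ₂(ξ(h)₍₂₎)`. These are the two sides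
of (2.3) for `N` at `ξ(h)`, since `ξ` is a coalgebra map.
-/

open TensorProduct

variable {k H₁ H₂ : Type*} [Field k] [Ring H₁] [Ring H₂]
  [HopfAlgebra k H₁] [HopfAlgebra k H₂]

namespace TensorProduct

variable {R M N P Q M' N' : Type*} [CommSemiring R]
  [AddCommMonoid M] [AddCommMonoid N] [AddCommMonoid P] [AddCommMonoid Q]
  [AddCommMonoid M'] [AddCommMonoid N'] [Module R M] [Module R N] [Module R P] [Module R Q]
  [Module R M'] [Module R N']

theorem map_tensorTensorTensorComm_tmul_tmul (f : M ⊗[R] P →ₗ[R] M') (g : N ⊗[R] Q →ₗ[R] N')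
    (x : M ⊗[R] N) (p : P) (q : Q) :
    map f g (tensorTensorTensorComm R M N P Q (x ⊗ₜ (p ⊗ₜ q))) =
      map (f ∘ₗ (mk R M P).flip p) (g ∘ₗ (mk R N Q).flip q) x := by
  induction x using TensorProduct.induction_on with
  | zero => simp
  | tmul m n => simp
  | add x y hx hy => simp only [add_tmul, map_add, hx, hy]

end TensorProduct

theorem lmulR_tmul {k H N : Type*} [Field k] [Ring H] [HopfAlgebra k H]
    [AddCommGroup N] [Module k N] (a : H) (y : N ⊗[k] H) :
    lmulR k H N (a ⊗ₜ y) = map LinearMap.id (LinearMap.mulLeft k a) y := by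
  induction y using TensorProduct.induction_on with
  | zero => simp
  | tmul n t => simp [lmulR]
  | add x y hx hy => simp only [tmul_add, map_add, hx, hy]

section Braiding

open LinearMap

variable {M N : Type*} [AddCommGroup M] [Module k M] [AddCommGroup N] [Module k N]
  (bInv : H₁ →ₗ[k] H₁) (dInv : H₂ →ₗ[k] H₂) (SM : YDLStruct k H₁ H₂ M) (SN : YDLStruct k H₁ H₂ N)

noncomputable def braidAct : (H₁ ⊗[k] M) ⊗[k] (N ⊗[k] H₂) →ₗ[k] N ⊗[k] M :=
  map (SN.actL ∘ₗ map bInv id) (SM.actR ∘ₗ map id dInv) ∘ₗ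
    (tensorTensorTensorComm k H₁ M N H₂).toLinearMap

@[simp]
theorem braidAct_tmul (p : H₁) (m : M) (n : N) (t : H₂) :
    braidAct bInv dInv SM SN ((p ⊗ₜ m) ⊗ₜ (n ⊗ₜ t)) =
      SN.actL (bInv p ⊗ₜ n) ⊗ₜ SM.actR (m ⊗ₜ dInv t) := by
  simp [braidAct]

theorem braid_eq_braidAct_comp :
    braid bInv dInv SM SN = braidAct bInv dInv SM SN ∘ₗ map SM.coL SN.coR := rfl

variable {bInv dInv SM SN}

theorem braidAct_comp_map_actR_left
    (hmul : ∀ (m : M) (a b : H₂), SM.actR (SM.actR (m ⊗ₜ a) ⊗ₜ b) = SM.actR (m ⊗ₜ (a * b)))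
    (hd : ∀ a b, dInv (a * b) = dInv a * dInv b) (g : H₂) :
    braidAct bInv dInv SM SN ∘ₗ map (map id (SM.actR ∘ₗ (mk k M H₂).flip (dInv g))) id =
      braidAct bInv dInv SM SN ∘ₗ map id (map id (mulLeft k g)) := by
  ext p m n t
  simp [hmul, hd]

theorem map_actR_comp_braidAct
    (hbimod : ∀ (p : H₁) (n : N) (a : H₂),
      SN.actR (SN.actL (p ⊗ₜ n) ⊗ₜ a) = SN.actL (p ⊗ₜ SN.actR (n ⊗ₜ a)))
    (hmul : ∀ (m : M) (a b : H₂), SM.actR (SM.actR (m ⊗ₜ a) ⊗ₜ b) = SM.actR (m ⊗ₜ (a * b)))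
    (hd : ∀ a b, dInv (a * b) = dInv a * dInv b) (g s : H₂) :
    map (SN.actR ∘ₗ (mk k N H₂).flip g) (SM.actR ∘ₗ (mk k M H₂).flip (dInv s)) ∘ₗ
        braidAct bInv dInv SM SN =
      braidAct bInv dInv SM SN ∘ₗ
        map id (map (SN.actR ∘ₗ (mk k N H₂).flip g) (mulRight k s)) := by
  ext p m n t
  simp [hbimod, hmul, hd]

theorem braid_tensorYDL_actR
    (hmul : ∀ (m : M) (a b : H₂), SM.actR (SM.actR (m ⊗ₜ a) ⊗ₜ b) = SM.actR (m ⊗ₜ (a * b)))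
    (hlong : ∀ (m : M) (a : H₂),
      SM.coL (SM.actR (m ⊗ₜ a)) = map id (SM.actR ∘ₗ (mk k M H₂).flip a) (SM.coL m))
    (hd : ∀ a b, dInv (a * b) = dInv a * dInv b) (u v : H₁ →ₗ[k] H₁) (γ w ξ : H₂ →ₗ[k] H₂)
    (hw : ∀ a, dInv (γ (ξ a)) = w a) (m : M) (n : N) (h : H₂) :
    braid bInv dInv SM SN ((tensorYDL u v w ξ SM SN).actR ((m ⊗ₜ n) ⊗ₜ h)) =
      braidAct bInv dInv SM SN (SM.coL m ⊗ₜ lmulR k H₂ N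
        (map γ (SN.coR ∘ₗ SN.actR ∘ₗ mk k N H₂ n) (map ξ ξ (Coalgebra.comul h)))) := by
  simp only [tensorYDL, coe_comp, LinearEquiv.coe_coe, Function.comp_apply, map_tmul, id_coe,
    id_eq]
  generalize Coalgebra.comul (R := k) h = c
  induction c using TensorProduct.induction_on with
  | zero => simp
  | add x y hx hy => simp only [map_add, tmul_add, hx, hy]
  | tmul a b =>
    have hact := congr($(braidAct_comp_map_actR_left (SN := SN) (bInv := bInv) hmul hd
      (γ (ξ a))) (SM.coL m ⊗ₜ SN.coR (SN.actR (n ⊗ₜ ξ b))))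
    simp only [coe_comp, Function.comp_apply, map_tmul, id_coe, id_eq] at hact
    simp only [map_tmul, tensorTensorTensorComm_tmul, braid_eq_braidAct_comp, coe_comp,
      Function.comp_apply, ← hw, hlong, hact, lmulR_tmul, mk_apply]

theorem tensorYDL_twistYDL_actR_braidAct
    (hbimod : ∀ (p : H₁) (n : N) (a : H₂),
      SN.actR (SN.actL (p ⊗ₜ n) ⊗ₜ a) = SN.actL (p ⊗ₜ SN.actR (n ⊗ₜ a)))
    (hmul : ∀ (m : M) (a b : H₂), SM.actR (SM.actR (m ⊗ₜ a) ⊗ₜ b) = SM.actR (m ⊗ₜ (a * b)))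
    (hd : ∀ a b, dInv (a * b) = dInv a * dInv b) (u v u' v' : H₁ →ₗ[k] H₁)
    (w x w' x' ξ δ : H₂ →ₗ[k] H₂) (hξ : ∀ a, w (w' a) = ξ a) (hx' : ∀ a, x' a = dInv (δ (ξ a)))
    (l : H₁ ⊗[k] M) (r : N ⊗[k] H₂) (h : H₂) :
    (tensorYDL u' v' w' x' (twistYDL u v w x SN) SM).actR
        (braidAct bInv dInv SM SN (l ⊗ₜ r) ⊗ₜ h) =
      braidAct bInv dInv SM SN (l ⊗ₜ map SN.actR (mul' k H₂ ∘ₗ map id δ)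
        (tensorTensorTensorComm k N H₂ H₂ H₂ (r ⊗ₜ map ξ ξ (Coalgebra.comul h)))) := by
  simp only [tensorYDL, twistYDL, coe_comp, LinearEquiv.coe_coe, Function.comp_apply, map_tmul,
    id_coe, id_eq]
  generalize Coalgebra.comul (R := k) h = c
  induction c using TensorProduct.induction_on with
  | zero => simp
  | add x y hx hy => simp only [map_add, tmul_add, hx, hy]
  | tmul a b =>
    have hN : SN.actR ∘ₗ map id w ∘ₗ (mk k N H₂).flip (w' a) =
        SN.actR ∘ₗ (mk k N H₂).flip (ξ a) := by
      ext; simp [hξ]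
    have hM : SM.actR ∘ₗ (mk k M H₂).flip (x' b) =
        SM.actR ∘ₗ (mk k M H₂).flip (dInv (δ (ξ b))) := by
      ext; simp [hx']
    have hH : mul' k H₂ ∘ₗ map id δ ∘ₗ (mk k H₂ H₂).flip (ξ b) = mulRight k (δ (ξ b)) := by
      ext; simp
    simp only [map_tmul, map_tensorTensorTensorComm_tmul_tmul, comp_assoc, hN, hM, hH]
    exact congr($(map_actR_comp_braidAct hbimod hmul hd (ξ a) (δ (ξ b))) (l ⊗ₜ r))

end Braiding

/-- the braiding `c_{M,N} : M ⊗ N → ᴹN ⊗ M` is right `H₂`-linear: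
`c_{M,N}((m⊗n) ◁ h'') = c_{M,N}(m⊗n) ◁ h''`, where the right `H₂`-actions come from
the tensor product structures on `M ⊗ N` and on `ᴹN ⊗ M`. -/
theorem braid_right_linear {k H₁ H₂ M N : Type*} [Field k] [Ring H₁] [Ring H₂]
    [HopfAlgebra k H₁] [HopfAlgebra k H₂]
    [AddCommGroup M] [Module k M] [AddCommGroup N] [Module k N]
    (α₁ β₁ α₂ β₂ : H₁ ≃ₐc[k] H₁) (γ₁ δ₁ γ₂ δ₂ : H₂ ≃ₐc[k] H₂)
    (SM : YDLStruct k H₁ H₂ M) (SN : YDLStruct k H₁ H₂ N)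
    (hM : IsYDL α₁.toLinearMap β₁.toLinearMap γ₁.toLinearMap δ₁.toLinearMap SM)
    (hN : IsYDL α₂.toLinearMap β₂.toLinearMap γ₂.toLinearMap δ₂.toLinearMap SN) :
    braid β₁.symm.toLinearMap δ₁.symm.toLinearMap SM SN ∘ₗ
        (tensorYDL (α₂.toLinearMap)
          (α₂.toLinearMap ∘ₗ β₁.toLinearMap ∘ₗ α₂.symm.toLinearMap)
          (γ₂.toLinearMap)
          (γ₂.symm.toLinearMap ∘ₗ δ₁.toLinearMap ∘ₗ γ₂.toLinearMap) SM SN).actR =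
      (tensorYDL (α₁.toLinearMap)
          -- `α₁ ∘ (β of ᴹN) ∘ α₁⁻¹`
          (α₁.toLinearMap ∘ₗ
            (α₁.symm.toLinearMap ∘ₗ α₂.toLinearMap ∘ₗ β₁.toLinearMap ∘ₗ
              α₂.symm.toLinearMap ∘ₗ β₂.toLinearMap ∘ₗ β₁.symm.toLinearMap ∘ₗ
              α₁.toLinearMap) ∘ₗ α₁.symm.toLinearMap)
          (γ₁.toLinearMap)
          -- `γ₁⁻¹ ∘ (δ of ᴹN) ∘ γ₁`
          (γ₁.symm.toLinearMap ∘ₗ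
            (γ₁.toLinearMap ∘ₗ δ₁.symm.toLinearMap ∘ₗ δ₂.toLinearMap ∘ₗ
              γ₂.symm.toLinearMap ∘ₗ δ₁.toLinearMap ∘ₗ γ₂.toLinearMap ∘ₗ
              γ₁.symm.toLinearMap) ∘ₗ γ₁.toLinearMap)
          -- the twisted object `ᴹN`
          (twistYDL (β₁.symm.toLinearMap ∘ₗ α₁.toLinearMap)
            (α₁.symm.toLinearMap ∘ₗ α₂.toLinearMap ∘ₗ β₁.toLinearMap ∘ₗ
              α₂.symm.toLinearMap)
            (γ₂.symm.toLinearMap ∘ₗ δ₁.toLinearMap ∘ₗ γ₂.toLinearMap ∘ₗ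
              γ₁.symm.toLinearMap)
            (γ₁.toLinearMap ∘ₗ δ₁.symm.toLinearMap) SN) SM).actR ∘ₗ
      TensorProduct.map (braid β₁.symm.toLinearMap δ₁.symm.toLinearMap SM SN)
        LinearMap.id := by
  refine TensorProduct.ext_threefold fun m n h => ?_
  have hξ : TensorProduct.map (γ₂.symm.toLinearMap ∘ₗ δ₁.toLinearMap ∘ₗ γ₂.toLinearMap)
      (γ₂.symm.toLinearMap ∘ₗ δ₁.toLinearMap ∘ₗ γ₂.toLinearMap) (Coalgebra.comul h) =
      Coalgebra.comul (γ₂.symm (δ₁ (γ₂ h))) :=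
    CoalgHomClass.map_comp_comul_apply (γ₂.trans (δ₁.trans γ₂.symm)) h
  rw [LinearMap.comp_apply, braid_tensorYDL_actR hM.actR_mul hM.longR (map_mul δ₁.symm) _ _
      γ₂.toLinearMap _ _ (fun a => by simp), LinearMap.comp_apply, TensorProduct.map_tmul,
    LinearMap.id_apply, braid_eq_braidAct_comp, LinearMap.comp_apply, TensorProduct.map_tmul,
    tensorYDL_twistYDL_actR_braidAct hN.act_bimod hM.actR_mul (map_mul δ₁.symm) _ _ _ _ _ _ _ _
      (γ₂.symm.toLinearMap ∘ₗ δ₁.toLinearMap ∘ₗ γ₂.toLinearMap) δ₂.toLinearMap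
      (fun a => by simp) (fun a => by simp), hξ, hN.ydR]
end

section
/- Let G₁, G₂ be groups, α, β ∈ Aut(G₁), γ, δ ∈ Aut(G₂), and let M = ⊕_{g∈G₁,h∈G₂} _{g}M_{h} be a finite-dimensional (α,β,γ,δ)-Yetter-Drinfeld-Long bimodule over k[G₁], k[G₂]. Equip M* with the actions (g▷f)(m) = f(g⁻¹▷m) and (f◁h)(m) = f(m ◁ δ⁻¹γ⁻¹(h⁻¹)), and the grading M* = ⊕_{g∈G₁,h∈G₂} ((_{βα(g⁻¹)}M_{h⁻¹})*). Then M* is an (α⁻¹, α⁻¹β⁻¹α, γ⁻¹, γδ⁻¹γ⁻¹)-Yetter-Drinfeld-Long bimodule, i.e. g' ▷ (M*)_{(g,h)} ◁ h' ⊆ (M*)_{(α⁻¹(g') g (α⁻¹β⁻¹α)(g'⁻¹), γ⁻¹(h'⁻¹) h (γδ⁻¹γ⁻¹)(h'))}. -/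
/-- the dual of a finite-dimensional graded Yetter-Drinfeld-Long bimodule
over group algebras `k[G₁]`, `k[G₂]`, with the actions `(g▷f)(m) = f(g⁻¹▷m)`,
`(f◁h)(m) = f(m ◁ δ⁻¹γ⁻¹(h⁻¹))` and the grading `(M*)_(g,h) = (_{βα(g⁻¹)}M_{h⁻¹})*`,
is an `(α⁻¹, α⁻¹β⁻¹α, γ⁻¹, γδ⁻¹γ⁻¹)`-Yetter-Drinfeld-Long bimodule. -/
theorem ydl_dual_grading_groups
    {k : Type*} [Field k] {G₁ G₂ M : Type*} [Group G₁] [Group G₂] [DecidableEq G₁] [DecidableEq G₂]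
    [AddCommGroup M] [Module k M] [FiniteDimensional k M]
    (α β : G₁ ≃* G₁) (γ δ : G₂ ≃* G₂)
    -- linear left G₁-action and right G₂-action on M
    (lM : G₁ →* (M →ₗ[k] M)) (rM : G₂ → (M →ₗ[k] M))
    (hrM₁ : rM 1 = LinearMap.id) (hrM : ∀ h h', rM (h * h') = rM h' ∘ₗ rM h)
    (hcomm : ∀ g h, lM g ∘ₗ rM h = rM h ∘ₗ lM g)
    -- grading by submodules, forming a direct sum decomposition
    (Mc : G₁ → G₂ → Submodule k M)
    (hdecomp : DirectSum.IsInternal (fun p : G₁ × G₂ => Mc p.1 p.2))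
    -- (α,β,γ,δ)-compatibility for M
    (hM : ∀ g' h' g h m, m ∈ Mc g h →
      rM h' (lM g' m) ∈ Mc (α g' * g * β g'⁻¹) (γ h'⁻¹ * h * δ h')) :
    -- the component of `M*` of degree `(g,h)` consists of the functionals vanishing on all
    -- components other than `_{βα(g⁻¹)}M_{h⁻¹}`; conclusion: compatibility of the dual
    -- grading with the dual actions, for the parameters `(α⁻¹, α⁻¹β⁻¹α, γ⁻¹, γδ⁻¹γ⁻¹)`.
    ∀ (g' : G₁) (h' : G₂) (g : G₁) (h : G₂) (f : Module.Dual k M),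
      (∀ g₀ h₀, (g₀, h₀) ≠ (β (α g⁻¹), h⁻¹) → ∀ m ∈ Mc g₀ h₀, f m = 0) →
      (∀ g₀ h₀,
        (g₀, h₀) ≠ (β (α (α.symm g' * g * α.symm (β.symm (α g'⁻¹)))⁻¹),
          (γ.symm h'⁻¹ * h * γ (δ.symm (γ.symm h')))⁻¹) →
        ∀ m ∈ Mc g₀ h₀,
          (f ∘ₗ lM g'⁻¹ ∘ₗ rM (δ.symm (γ.symm h'⁻¹))) m = 0) := by
  intro g' h' g h f hf g₀ h₀ hne m hm
  set s := δ.symm (γ.symm h'⁻¹) with hs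
  have key := hM g'⁻¹ s g₀ h₀ m hm
  have hswap : lM g'⁻¹ (rM s m) = rM s (lM g'⁻¹ m) :=
    LinearMap.congr_fun (hcomm g'⁻¹ s) m
  simp only [LinearMap.comp_apply]
  rw [hswap]
  refine hf _ _ ?_ _ key
  intro hcontra
  apply hne
  rw [Prod.mk.injEq] at hcontra ⊢
  obtain ⟨h1, h2⟩ := hcontra
  constructor
  · have : g₀ = (α g'⁻¹)⁻¹ * β (α g⁻¹) * (β g'⁻¹⁻¹)⁻¹ := by
      rw [← h1]; group
    rw [this]
    simp [map_mul, map_inv, mul_assoc]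
  · have : h₀ = (γ s⁻¹)⁻¹ * h⁻¹ * (δ s)⁻¹ := by
      rw [← h2]; group
    rw [this, hs]
    simp [map_mul, map_inv, mul_assoc]
end
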